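/- arXiv:2509.16802 — 9 statements merged into one kernel-verified Lean document; each statement's English description precedes it below -/
import Mathlib

section
/- There exists a universal constant C > 0 such that the following holds. Let k ≥ 2, let M be a finite set, let v_1, …, v_n : 2^M → ℝ have marginals bounded by 1, and let t ≥ 1 be a parameter. Suppose there exists a fractional k-coloring χ : M → Δ_k such that (1) for every agent i ∈ [n] and all colors ℓ, ℓ' ∈ [k], F_i(χ_ℓ) = F_i(χ_{ℓ'}), where F_i is the multilinear extension of v_i, and (2) for each ℓ ∈ [k], the vector χ_ℓ has at most t non-integral coordinates. Then there exists a k-coloring χ' : M → [k] with disc(V, k, χ') ≤ C·√(t·log(nk)); in particular disc(V, k) ≤ C·√(t·log(nk)). -/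
/-!
Round `χ` randomly and independently: item `j` receives colour `ℓ` with probability `χ j ℓ`.
For each agent `i` and colour `ℓ`, the value `v_i` of the colour class of `ℓ` has mean
`F_i(χ_ℓ)`, which by hypothesis does not depend on `ℓ`. Almost surely that value depends only on
the at most `t` items that are fractional in `χ_ℓ`, and changing the colour of one item moves it by
at most `1`, so McDiarmid's inequality puts it within `√(2 t log (4nk))` of its mean except with
probability `1/(2nk)`. A union bound over the `nk` pairs `(i, ℓ)` leaves a colouring in the
support that is close to the common mean for all of them at once.
-/

/-- The multilinear extension of a set function `v : Finset α → ℝ`: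
`F(x) = ∑_{S ⊆ M} v(S) ∏_{j ∈ S} x_j ∏_{j ∉ S} (1 - x_j)`. -/
noncomputable def mlext {α : Type*} [Fintype α] [DecidableEq α]
    (v : Finset α → ℝ) (x : α → ℝ) : ℝ :=
  ∑ S : Finset α, v S * ((∏ j ∈ S, x j) * ∏ j ∈ Sᶜ, (1 - x j))

open Finset Function Real

section FiniteDistribution

variable {β : Type*} [Fintype β] {q : β → ℝ}

lemma abs_sum_mul_le_of_abs_le {z : β → ℝ} {r : ℝ} (hq0 : ∀ b, 0 ≤ q b) (hq1 : ∑ b, q b = 1)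
    (hz : ∀ b, |z b| ≤ r) : |∑ b, q b * z b| ≤ r :=
  calc |∑ b, q b * z b| ≤ ∑ b, q b * r := (abs_sum_le_sum_abs _ _).trans <| sum_le_sum fun b _ => by
        rw [abs_mul, abs_of_nonneg (hq0 b)]
        exact mul_le_mul_of_nonneg_left (hz b) (hq0 b)
    _ = r := by rw [← sum_mul, hq1, one_mul]

/-- Hoeffding's lemma for a centred variable with values in `[-1, 1]`. -/
lemma sum_mul_exp_le_exp_sq_div_two {x : β → ℝ} (hq0 : ∀ b, 0 ≤ q b) (hq1 : ∑ b, q b = 1)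
    (hmean : ∑ b, q b * x b = 0) (hx : ∀ b, |x b| ≤ 1) (l : ℝ) :
    ∑ b, q b * exp (l * x b) ≤ exp (l ^ 2 / 2) :=
  calc ∑ b, q b * exp (l * x b) ≤ ∑ b, q b * (cosh l + x b * sinh l) :=
        sum_le_sum fun b _ => mul_le_mul_of_nonneg_left
          (by rw [mul_comm]; exact exp_mul_le_cosh_add_mul_sinh (hx b) l) (hq0 b)
    _ = cosh l := by
        simp only [mul_add, sum_add_distrib, ← sum_mul, ← mul_assoc, hq1, hmean, one_mul,
          zero_mul, add_zero]
    _ ≤ exp (l ^ 2 / 2) := cosh_le_exp_half_sq l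

lemma eq_of_apply_eq_one (hq0 : ∀ b, 0 ≤ q b) (hq1 : ∑ b, q b = 1) {b c : β} (hb : q b = 1)
    (hc : q c ≠ 0) : c = b := by
  classical
  by_contra hcb
  have : q c + q b ≤ 1 := by
    rw [← sum_pair hcb, ← hq1]
    exact sum_le_sum_of_subset_of_nonneg (subset_univ _) fun b _ _ => hq0 b
  exact hc (le_antisymm (by linarith) (hq0 c))

end FiniteDistribution

section BoundedDifferences

variable {α β : Type*} [DecidableEq α] [Fintype β] {p : α → β → ℝ}

def BoundedDifferences (f : (α → β) → ℝ) : Prop :=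
  ∀ g j b, |f (update g j b) - f g| ≤ 1

/-- The conditional expectation of `f` given all coordinates but `j`. -/
noncomputable def coordAverage (p : α → β → ℝ) (j : α) (f : (α → β) → ℝ) (g : α → β) : ℝ :=
  ∑ b, p j b * f (update g j b)

variable {f : (α → β) → ℝ} {j : α}

lemma DependsOn.coordAverage {s : Set α} (hf : DependsOn f (insert j s)) :
    DependsOn (coordAverage p j f) s := fun g g' hgg' =>
  sum_congr rfl fun b _ => congrArg _ <| hf fun i hi => by
    rcases eq_or_ne i j with rfl | hij
    · simp
    · simp [hij, hgg' i (hi.resolve_left hij)]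

lemma BoundedDifferences.coordAverage (hp0 : ∀ j b, 0 ≤ p j b) (hp1 : ∀ j, ∑ b, p j b = 1)
    (hf : BoundedDifferences f) : BoundedDifferences (coordAverage p j f) := by
  intro g i c
  rcases eq_or_ne i j with rfl | hij
  · simp [_root_.coordAverage]
  · simp only [_root_.coordAverage, update_comm hij, ← mul_sub, ← sum_sub_distrib]
    exact abs_sum_mul_le_of_abs_le (hp0 j) (hp1 j) fun b => hf _ i c

lemma sum_mul_update_sub_coordAverage (hp1 : ∀ j, ∑ b, p j b = 1) (g : α → β) :
    ∑ b, p j b * (f (update g j b) - coordAverage p j f g) = 0 := by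
  simp only [mul_sub, sum_sub_distrib, ← sum_mul, hp1, one_mul, coordAverage, sub_self]

lemma abs_update_sub_coordAverage_le (hp0 : ∀ j b, 0 ≤ p j b) (hp1 : ∀ j, ∑ b, p j b = 1)
    (hf : BoundedDifferences f) (g : α → β) (b : β) :
    |f (update g j b) - coordAverage p j f g| ≤ 1 := by
  have h : f (update g j b) - coordAverage p j f g =
      ∑ c, p j c * (f (update g j b) - f (update g j c)) := by
    simp only [mul_sub, sum_sub_distrib, ← sum_mul, hp1, one_mul, coordAverage]
  rw [h]
  refine abs_sum_mul_le_of_abs_le (hp0 j) (hp1 j) fun c => ?_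
  simpa [abs_sub_comm] using hf (update g j b) j c

lemma coordAverage_exp_le (hp0 : ∀ j b, 0 ≤ p j b) (hp1 : ∀ j, ∑ b, p j b = 1)
    (hf : BoundedDifferences f) (l c : ℝ) (g : α → β) :
    coordAverage p j (fun g => exp (l * (f g - c))) g ≤
      exp (l ^ 2 / 2) * exp (l * (coordAverage p j f g - c)) :=
  calc coordAverage p j (fun g => exp (l * (f g - c))) g
      = (∑ b, p j b * exp (l * (f (update g j b) - coordAverage p j f g))) *
          exp (l * (coordAverage p j f g - c)) := by
        simp only [coordAverage, sum_mul, mul_assoc, ← exp_add, ← mul_add, sub_add_sub_cancel]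
    _ ≤ exp (l ^ 2 / 2) * exp (l * (coordAverage p j f g - c)) :=
        mul_le_mul_of_nonneg_right (sum_mul_exp_le_exp_sq_div_two (hp0 j) (hp1 j)
          (sum_mul_update_sub_coordAverage hp1 g)
          (abs_update_sub_coordAverage_le hp0 hp1 hf g) l) (exp_nonneg _)

end BoundedDifferences

section ProductDistribution

variable {α β : Type*} [Fintype α] {p : α → β → ℝ}

noncomputable def prodWeight (p : α → β → ℝ) (g : α → β) : ℝ := ∏ j, p j (g j)

lemma prodWeight_nonneg (hp0 : ∀ j b, 0 ≤ p j b) (g : α → β) : 0 ≤ prodWeight p g :=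
  prod_nonneg fun j _ => hp0 j (g j)

variable [DecidableEq α]

lemma prodWeight_mul_eq_prodWeight_update_mul (g : α → β) (j : α) (b : β) :
    prodWeight p g * p j b = prodWeight p (update g j b) * p j (g j) := by
  simp only [prodWeight, apply_update (fun i => p i), prod_update_of_mem (mem_univ j)]
  rw [prod_eq_mul_prod_sdiff_singleton_of_mem (mem_univ j)]
  ring

variable [Fintype β]

lemma sum_prodWeight (hp1 : ∀ j, ∑ b, p j b = 1) : ∑ g, prodWeight p g = 1 := by
  simp only [prodWeight, ← Fintype.prod_sum, hp1, prod_const_one]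

noncomputable def prodExpect (p : α → β → ℝ) (f : (α → β) → ℝ) : ℝ :=
  ∑ g, prodWeight p g * f g

lemma prodExpect_const (hp1 : ∀ j, ∑ b, p j b = 1) (c : ℝ) : prodExpect p (fun _ => c) = c := by
  rw [prodExpect, ← sum_mul, sum_prodWeight hp1, one_mul]

lemma prodExpect_const_mul (c : ℝ) (f : (α → β) → ℝ) :
    prodExpect p (fun g => c * f g) = c * prodExpect p f := by
  simp only [prodExpect, mul_sum, mul_left_comm]

lemma prodExpect_mono (hp0 : ∀ j b, 0 ≤ p j b) {f f' : (α → β) → ℝ} (h : ∀ g, f g ≤ f' g) :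
    prodExpect p f ≤ prodExpect p f' :=
  sum_le_sum fun g _ => mul_le_mul_of_nonneg_left (h g) (prodWeight_nonneg hp0 g)

lemma prodExpect_congr {f f' : (α → β) → ℝ} (h : ∀ g, prodWeight p g ≠ 0 → f g = f' g) :
    prodExpect p f = prodExpect p f' := by
  refine sum_congr rfl fun g _ => ?_
  by_cases hg : prodWeight p g = 0
  · simp [hg]
  · rw [h g hg]

lemma prodExpect_coordAverage (hp1 : ∀ j, ∑ b, p j b = 1) (j : α) (f : (α → β) → ℝ) :
    prodExpect p (coordAverage p j f) = prodExpect p f := by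
  -- `(g, b) ↦ (update g j b, g j)` is an involution carrying one side to the other
  let e : Equiv.Perm ((α → β) × β) := Involutive.toPerm (fun x => (update x.1 j x.2, x.1 j))
    fun x => by simp
  calc prodExpect p (coordAverage p j f)
      = ∑ x : (α → β) × β,
          prodWeight p (update x.1 j x.2) * p j (x.1 j) * f (update x.1 j x.2) := by
        simp only [prodExpect, coordAverage, Fintype.sum_prod_type, mul_sum,
          ← prodWeight_mul_eq_prodWeight_update_mul, mul_assoc]
    _ = ∑ x : (α → β) × β, prodWeight p x.1 * p j x.2 * f x.1 :=
        Equiv.sum_comp e (fun x : (α → β) × β => prodWeight p x.1 * p j x.2 * f x.1)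
    _ = prodExpect p f := by
        simp only [prodExpect, Fintype.sum_prod_type, ← mul_sum, mul_right_comm _ _ (f _), hp1,
          mul_one]

variable {f : (α → β) → ℝ}

lemma prodExpect_exp_le (hp0 : ∀ j b, 0 ≤ p j b) (hp1 : ∀ j, ∑ b, p j b = 1) {T : Finset α}
    (hfT : DependsOn f T) (hf : BoundedDifferences f) (l : ℝ) :
    prodExpect p (fun g => exp (l * (f g - prodExpect p f))) ≤ exp (l ^ 2 * #T / 2) := by
  induction T using Finset.induction_on generalizing f with
  | empty =>
    have hconst : ∀ g, prodExpect p f = f g := fun g => by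
      rw [← prodExpect_const hp1 (f g)]
      exact sum_congr rfl fun g' _ => by rw [hfT (x := g') (y := g) (by simp)]
    simp [← hconst, prodExpect_const hp1]
  | @insert j s hj ih =>
    have hmean := prodExpect_coordAverage hp1 j f
    calc prodExpect p (fun g => exp (l * (f g - prodExpect p f)))
        = prodExpect p (coordAverage p j fun g => exp (l * (f g - prodExpect p f))) :=
          (prodExpect_coordAverage hp1 j _).symm
      _ ≤ prodExpect p fun g => exp (l ^ 2 / 2) *
            exp (l * (coordAverage p j f g - prodExpect p (coordAverage p j f))) := by
          rw [hmean]
          exact prodExpect_mono hp0 (coordAverage_exp_le hp0 hp1 hf l _)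
      _ ≤ exp (l ^ 2 / 2) * exp (l ^ 2 * #s / 2) := by
          rw [prodExpect_const_mul]
          gcongr
          exact ih (DependsOn.coordAverage (by simpa using hfT)) (hf.coordAverage hp0 hp1)
      _ = exp (l ^ 2 * #(insert j s) / 2) := by
          rw [← exp_add, card_insert_of_notMem hj]
          push_cast
          ring_nf

/-- McDiarmid's inequality for functions of at most `t` of the coordinates. -/
lemma sum_prodWeight_lt_abs_sub_le (hp0 : ∀ j b, 0 ≤ p j b) (hp1 : ∀ j, ∑ b, p j b = 1)
    {T : Finset α} (hfT : DependsOn f T) (hf : BoundedDifferences f) {t a : ℝ} (hT : #T ≤ t)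
    (ht : 0 < t) (ha : 0 ≤ a) :
    ∑ g ∈ univ.filter (fun g => a < |f g - prodExpect p f|), prodWeight p g ≤
      2 * exp (-a ^ 2 / (2 * t)) := by
  set l := a / t
  have hl : 0 ≤ l := div_nonneg ha ht.le
  set X := fun g => f g - prodExpect p f
  have hmarkov : ∀ g, a < |X g| → 1 ≤ exp (-(l * a)) * (exp (l * X g) + exp (-l * X g)) := by
    intro g hg
    rw [exp_neg, inv_mul_eq_div, one_le_div (exp_pos _)]
    have hla : l * a ≤ l * |X g| := mul_le_mul_of_nonneg_left hg.le hl
    rcases abs_choice (X g) with h | h <;> rw [h] at hla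
    · linarith [exp_le_exp.2 hla, exp_pos (-l * X g)]
    · linarith [exp_le_exp.2 (hla.trans_eq (by ring : l * -X g = -l * X g)), exp_pos (l * X g)]
  calc ∑ g ∈ univ.filter (fun g => a < |X g|), prodWeight p g
      ≤ ∑ g ∈ univ.filter (fun g => a < |X g|),
          prodWeight p g * (exp (-(l * a)) * (exp (l * X g) + exp (-l * X g))) :=
        sum_le_sum fun g hg =>
          le_mul_of_one_le_right (prodWeight_nonneg hp0 g) (hmarkov g (mem_filter.1 hg).2)
    _ ≤ ∑ g, prodWeight p g * (exp (-(l * a)) * (exp (l * X g) + exp (-l * X g))) :=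
        sum_le_sum_of_subset_of_nonneg (filter_subset _ _) fun g _ _ =>
          mul_nonneg (prodWeight_nonneg hp0 g) (by positivity)
    _ = exp (-(l * a)) * (prodExpect p (fun g => exp (l * X g)) +
          prodExpect p (fun g => exp (-l * X g))) := by
        rw [prodExpect, prodExpect, ← sum_add_distrib, mul_sum]
        exact sum_congr rfl fun g _ => by ring
    _ ≤ exp (-(l * a)) * (exp (l ^ 2 * #T / 2) + exp ((-l) ^ 2 * #T / 2)) := by
        gcongr
        · exact prodExpect_exp_le hp0 hp1 hfT hf l
        · exact prodExpect_exp_le hp0 hp1 hfT hf (-l)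
    _ ≤ 2 * exp (-(l * a) + l ^ 2 * t / 2) := by
        rw [neg_sq, exp_add]
        nlinarith [exp_le_exp.2 (by gcongr : l ^ 2 * #T / 2 ≤ l ^ 2 * t / 2), exp_pos (-(l * a))]
    _ = 2 * exp (-a ^ 2 / (2 * t)) := by
        congr 2
        simp only [l]
        field_simp
        ring

lemma exists_prodWeight_ne_zero_forall_not (hp0 : ∀ j b, 0 ≤ p j b)
    (hp1 : ∀ j, ∑ b, p j b = 1) {ι : Type*} [Fintype ι] (bad : ι → (α → β) → Prop)
    [∀ q, DecidablePred (bad q)] (h : ∑ q, ∑ g ∈ univ.filter (bad q), prodWeight p g < 1) :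
    ∃ g, prodWeight p g ≠ 0 ∧ ∀ q, ¬ bad q g := by
  by_contra! H
  have hterm : ∀ q g, 0 ≤ if bad q g then prodWeight p g else 0 := fun q g =>
    ite_nonneg (prodWeight_nonneg hp0 g) le_rfl
  refine h.not_ge ?_
  calc 1 = ∑ g, prodWeight p g := (sum_prodWeight hp1).symm
    _ ≤ ∑ g, ∑ q, if bad q g then prodWeight p g else 0 := sum_le_sum fun g _ => by
        by_cases hg : prodWeight p g = 0
        · exact hg.le.trans (sum_nonneg fun q _ => hterm q g)
        · obtain ⟨q, hq⟩ := H g hg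
          exact (if_pos hq).symm.le.trans (single_le_sum (fun q _ => hterm q g) (mem_univ q))
    _ = ∑ q, ∑ g ∈ univ.filter (bad q), prodWeight p g := by
        rw [sum_comm]
        simp only [sum_filter]

lemma prodExpect_colorClass [DecidableEq β] (hp1 : ∀ j, ∑ b, p j b = 1) (v : Finset α → ℝ)
    (b : β) : prodExpect p (fun g => v (univ.filter (g · = b))) = mlext v (p · b) := by
  let q (S : Finset α) (j : α) (c : β) : ℝ := if (c = b ↔ j ∈ S) then p j c else 0
  have hclass : ∀ S g, (if univ.filter (g · = b) = S then prodWeight p g else 0) =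
      ∏ j, q S j (g j) := fun S g => by
    have : univ.filter (g · = b) = S ↔ ∀ j, (g j = b ↔ j ∈ S) := by simp [Finset.ext_iff]
    simp only [q, Fintype.prod_ite_zero, prodWeight, this]
  have hmarginal : ∀ S j, ∑ c, q S j c = if j ∈ S then p j b else 1 - p j b := fun S j => by
    by_cases hj : j ∈ S
    · simp [q, hj]
    · simp [q, hj, ← hp1 j, sum_ite, filter_ne', sum_erase_eq_sub]
  calc prodExpect p (fun g => v (univ.filter (g · = b)))
      = ∑ S, v S * ∑ g, if univ.filter (g · = b) = S then prodWeight p g else 0 := by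
        simp only [prodExpect, mul_sum, mul_ite, mul_zero]
        rw [sum_comm]
        simp [mul_comm]
    _ = mlext v (p · b) := by
        simp only [hclass, ← Fintype.prod_sum, hmarginal, prod_ite, filter_mem_eq_inter, univ_inter,
          ← sdiff_eq_filter, ← compl_eq_univ_sdiff, mlext]

end ProductDistribution

section SetFunction

variable {α : Type*} [DecidableEq α]

lemma abs_sub_le_one_of_forall_ne {v : Finset α → ℝ} (hv : ∀ S j, |v (insert j S) - v S| ≤ 1)
    {S S' : Finset α} {j : α} (h : ∀ x ≠ j, x ∈ S ↔ x ∈ S') : |v S - v S'| ≤ 1 := by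
  have herase : S.erase j = S'.erase j := by
    ext x
    by_cases hx : x = j
    · simp [hx]
    · simp [hx, h x hx]
  by_cases hS : j ∈ S <;> by_cases hS' : j ∈ S'
  · rw [← insert_erase hS, ← insert_erase hS', herase]; simp
  · rw [← insert_erase hS, herase, erase_eq_of_notMem hS']; exact hv S' j
  · rw [abs_sub_comm, ← insert_erase hS', ← herase, erase_eq_of_notMem hS]; exact hv S j
  · rw [← erase_eq_of_notMem hS, ← erase_eq_of_notMem hS', herase]; simp

end SetFunction

section Rounding

variable {α β : Type*} [Fintype α]

noncomputable def fractionalSet (x : α → ℝ) : Finset α :=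
  univ.filter fun j => x j ≠ 0 ∧ x j ≠ 1

lemma card_fractionalSet (x : α → ℝ) : #(fractionalSet x) = {j | x j ≠ 0 ∧ x j ≠ 1}.ncard := by
  rw [← Set.ncard_coe_finset]
  congr
  ext
  simp [fractionalSet]

variable [DecidableEq α] [DecidableEq β]

/-- The colour class of `ℓ` under `g`, except that the items integral in `χ_ℓ` are placed
according to `χ`; on the support of the rounding it is the colour class itself. -/
noncomputable def pinnedClass (χ : α → β → ℝ) (ℓ : β) (g : α → β) : Finset α :=
  univ.filter fun j => j ∈ fractionalSet (χ · ℓ) ∧ g j = ℓ ∨ χ j ℓ = 1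

variable {χ : α → β → ℝ} {v : Finset α → ℝ} {ℓ : β}

lemma dependsOn_pinnedClass :
    DependsOn (fun g => v (pinnedClass χ ℓ g)) (fractionalSet (χ · ℓ)) := fun g g' h => by
  refine congrArg v (filter_congr fun j _ => ?_)
  by_cases hj : j ∈ fractionalSet (χ · ℓ)
  · simp [hj, h j hj]
  · simp [hj]

lemma boundedDifferences_pinnedClass (hv : ∀ S j, |v (insert j S) - v S| ≤ 1) :
    BoundedDifferences (fun g => v (pinnedClass χ ℓ g)) :=
  fun g j _ => abs_sub_le_one_of_forall_ne (j := j) hv fun x hx => by simp [pinnedClass, hx]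

variable [Fintype β]

lemma pinnedClass_eq_filter (hχ0 : ∀ j b, 0 ≤ χ j b) (hχ1 : ∀ j, ∑ b, χ j b = 1) {g : α → β}
    (hg : prodWeight χ g ≠ 0) : pinnedClass χ ℓ g = univ.filter (g · = ℓ) := by
  refine filter_congr fun j _ => ?_
  have hgj : χ j (g j) ≠ 0 := prod_ne_zero_iff.1 hg j (mem_univ j)
  have h1 : χ j ℓ = 1 → g j = ℓ := fun h => eq_of_apply_eq_one (hχ0 j) (hχ1 j) h hgj
  have h0 : g j = ℓ → χ j ℓ ≠ 0 := fun h => h ▸ hgj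
  simp only [fractionalSet, mem_filter, mem_univ, true_and]
  tauto

lemma prodExpect_pinnedClass (hχ0 : ∀ j b, 0 ≤ χ j b) (hχ1 : ∀ j, ∑ b, χ j b = 1) :
    prodExpect χ (fun g => v (pinnedClass χ ℓ g)) = mlext v (χ · ℓ) := by
  rw [prodExpect_congr fun g hg => by rw [pinnedClass_eq_filter hχ0 hχ1 hg],
    prodExpect_colorClass hχ1]

lemma sum_prodWeight_lt_abs_sub_mlext_le (hχ0 : ∀ j b, 0 ≤ χ j b) (hχ1 : ∀ j, ∑ b, χ j b = 1)
    (hv : ∀ S j, |v (insert j S) - v S| ≤ 1) {t a : ℝ} (hT : #(fractionalSet (χ · ℓ)) ≤ t)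
    (ht : 0 < t) (ha : 0 ≤ a) :
    ∑ g ∈ univ.filter (fun g => a < |v (pinnedClass χ ℓ g) - mlext v (χ · ℓ)|), prodWeight χ g ≤
      2 * exp (-a ^ 2 / (2 * t)) := by
  rw [← prodExpect_pinnedClass hχ0 hχ1]
  exact sum_prodWeight_lt_abs_sub_le hχ0 hχ1 dependsOn_pinnedClass
    (boundedDifferences_pinnedClass hv) hT ht ha

end Rounding

lemma two_mul_exp_neg_sqrt_sq {t x : ℝ} (ht : 0 < t) (hx : 1 ≤ x) :
    2 * exp (-√(2 * t * log (4 * x)) ^ 2 / (2 * t)) = (2 * x)⁻¹ := by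
  have hlog : 0 ≤ log (4 * x) := log_nonneg (by linarith)
  rw [sq_sqrt (by positivity), show -(2 * t * log (4 * x)) / (2 * t) = -log (4 * x) by
    field_simp, exp_neg, exp_log (by linarith)]
  field_simp
  ring

lemma two_mul_sqrt_two_mul_log_le {t x : ℝ} (ht : 0 ≤ t) (hx : 2 ≤ x) :
    2 * √(2 * t * log (4 * x)) ≤ 5 * √(t * log x) := by
  have hlog2 : log 2 ≤ log x := log_le_log (by norm_num) hx
  have hlog : log (4 * x) ≤ 3 * log x := by
    rw [log_mul (by norm_num) (by linarith), show (4 : ℝ) = 2 ^ 2 by norm_num, log_pow]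
    push_cast
    linarith
  have hA : 0 ≤ 2 * t * log (4 * x) := by
    have := log_nonneg (by linarith : (1 : ℝ) ≤ 4 * x); positivity
  have hB : 0 ≤ t * log x := mul_nonneg ht ((log_nonneg one_le_two).trans hlog2)
  have hAB : 2 * t * log (4 * x) ≤ 6 * (t * log x) := by nlinarith
  nlinarith [sq_sqrt hA, sq_sqrt hB, sqrt_nonneg (2 * t * log (4 * x)), sqrt_nonneg (t * log x)]

/-- **Rounding lemma.** There is a universal constant `C > 0` such that:
given `n` valuations with marginals bounded by `1` and a fractional `k`-coloring
`χ : α → Δ_k` whose color-vectors `χ_ℓ` all have equal multilinear value for every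
agent and have at most `t` non-integral coordinates each, there exists an integral
`k`-coloring `χ'` with discrepancy at most `C * √(t * log (n * k))`
(in particular `disc(V, k) ≤ C * √(t * log (n * k))`). -/
theorem rounding_lemma :
    ∃ C : ℝ, 0 < C ∧
      ∀ (k n t : ℕ), 2 ≤ k → 1 ≤ t →
      ∀ (α : Type) [Fintype α] [DecidableEq α]
        (v : Fin n → Finset α → ℝ),
        (∀ (i : Fin n) (S : Finset α) (j : α), |v i (insert j S) - v i S| ≤ 1) →
        ∀ (χ : α → Fin k → ℝ),
          (∀ (j : α) (ℓ : Fin k), χ j ℓ ∈ Set.Icc (0 : ℝ) 1) →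
          (∀ j : α, ∑ ℓ : Fin k, χ j ℓ = 1) →
          (∀ (i : Fin n) (ℓ ℓ' : Fin k),
            mlext (v i) (fun j => χ j ℓ) = mlext (v i) (fun j => χ j ℓ')) →
          (∀ ℓ : Fin k, {j : α | χ j ℓ ≠ 0 ∧ χ j ℓ ≠ 1}.ncard ≤ t) →
          ∃ χ' : α → Fin k,
            ∀ (i : Fin n) (ℓ ℓ' : Fin k),
              |v i (Finset.univ.filter fun j => χ' j = ℓ) -
                v i (Finset.univ.filter fun j => χ' j = ℓ')| ≤
                C * Real.sqrt (t * Real.log (n * k)) := by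
  refine ⟨5, by norm_num, fun k n t hk ht α _ _ v hv χ hχ hχ1 hmean hfrac => ?_⟩
  rcases n.eq_zero_or_pos with rfl | hn
  · exact ⟨fun _ => ⟨0, by omega⟩, fun i => i.elim0⟩
  have hχ0 : ∀ j ℓ, 0 ≤ χ j ℓ := fun j ℓ => (hχ j ℓ).1
  have hnk : (2 : ℝ) ≤ n * k := by exact_mod_cast (by nlinarith : 2 ≤ n * k)
  have ht0 : (0 : ℝ) < t := by exact_mod_cast ht
  set a := √(2 * t * log (4 * (n * k)))
  obtain ⟨g, hg, hclose⟩ := exists_prodWeight_ne_zero_forall_not hχ0 hχ1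
    (fun (q : Fin n × Fin k) g => a < |v q.1 (pinnedClass χ q.2 g) - mlext (v q.1) (χ · q.2)|) <|
    calc _ ≤ ∑ _q : Fin n × Fin k, (2 * (n * k : ℝ))⁻¹ := sum_le_sum fun q _ => by
          rw [← two_mul_exp_neg_sqrt_sq ht0 (by linarith)]
          exact sum_prodWeight_lt_abs_sub_mlext_le hχ0 hχ1 (hv q.1)
            (by exact_mod_cast (card_fractionalSet _).trans_le (hfrac q.2)) ht0 (sqrt_nonneg _)
      _ = 1 / 2 := by
          simp only [sum_const, card_univ, Fintype.card_prod, Fintype.card_fin, nsmul_eq_mul,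
            Nat.cast_mul]
          field_simp
      _ < 1 := by norm_num
  refine ⟨g, fun i ℓ ℓ' => ?_⟩
  have hℓ := not_lt.1 (hclose (i, ℓ))
  have hℓ' := not_lt.1 (hclose (i, ℓ'))
  simp only [hmean i ℓ ℓ', pinnedClass_eq_filter hχ0 hχ1 hg] at hℓ hℓ'
  calc _ ≤ a + a := (abs_sub_le _ (mlext (v i) (χ · ℓ')) _).trans
          (add_le_add hℓ (by rwa [abs_sub_comm]))
    _ ≤ 5 * √(t * log (n * k)) := by
      rw [← two_mul]
      exact two_mul_sqrt_two_mul_log_le ht0.le hnk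
end

section
/- For every valuation function v : 2^M → ℝ, every set S ⊆ M, and every item x ∈ M, the transfer imbalance satisfies |T_v(S, S^c) − T_v(S △ {x}, (S △ {x})^c)| ≤ 1. In other words, the map S ↦ T_v(S, S^c) is 1-Lipschitz with respect to Hamming distance. -/
/-- `transferAux v A B` is the minimum of `|S| + |S'|` over `S ⊆ A`, `S' ⊆ B`
with `v ((A \ S) ∪ S') ≤ v ((B \ S') ∪ S)` (intended for `v A ≥ v B`). -/
noncomputable def transferAux {α : Type*} [Fintype α] [DecidableEq α]
    (v : Finset α → ℝ) (A B : Finset α) : ℕ :=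
  sInf {t : ℕ | ∃ S S' : Finset α, S ⊆ A ∧ S' ⊆ B ∧
    v ((A \ S) ∪ S') ≤ v ((B \ S') ∪ S) ∧ t = S.card + S'.card}

/-- The transfer imbalance `T_v(A, B)`: if `v A ≥ v B` it is the least number of
items that must be exchanged between `A` and `B` to reverse the inequality;
otherwise `T_v(A, B) = T_v(B, A)`. -/
noncomputable def transferImbalance {α : Type*} [Fintype α] [DecidableEq α]
    (v : Finset α → ℝ) (A B : Finset α) : ℕ :=
  if v B ≤ v A then transferAux v A B else transferAux v B A

section Aux

variable {α : Type*} [Fintype α] [DecidableEq α]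

/-- Hamming distance from `A` to the nearest set `C` with `v C ≤ v Cᶜ`. -/
noncomputable def flipDist (v : Finset α → ℝ) (A : Finset α) : ℕ :=
  sInf {n : ℕ | ∃ C : Finset α, v C ≤ v Cᶜ ∧ n = (symmDiff A C).card}

lemma flipDist_set_nonempty (v : Finset α → ℝ) (A : Finset α) :
    {n : ℕ | ∃ C : Finset α, v C ≤ v Cᶜ ∧ n = (symmDiff A C).card}.Nonempty := by
  rcases le_total (v A) (v Aᶜ) with h | h
  · exact ⟨_, A, h, rfl⟩
  · exact ⟨_, Aᶜ, by simpa using h, rfl⟩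

lemma transferAux_compl (v : Finset α → ℝ) (A : Finset α) :
    transferAux v A Aᶜ = flipDist v A := by
  unfold transferAux flipDist
  congr 1
  ext n
  constructor
  · rintro ⟨T, T', hT, hT', hv, rfl⟩
    have hTmem : ∀ y, y ∈ T → y ∈ A := fun y h => hT h
    have hT'mem : ∀ y, y ∈ T' → y ∉ A := fun y h => Finset.mem_compl.1 (hT' h)
    refine ⟨(A \ T) ∪ T', ?_, ?_⟩
    · have hc : ((A \ T) ∪ T')ᶜ = (Aᶜ \ T') ∪ T := by
        ext y
        have h1 := hTmem y
        have h2 := hT'mem y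
        simp only [Finset.mem_compl, Finset.mem_union, Finset.mem_sdiff]
        tauto
      rw [hc]; exact hv
    · have hsd : symmDiff A ((A \ T) ∪ T') = T ∪ T' := by
        ext y
        have h1 := hTmem y
        have h2 := hT'mem y
        simp only [Finset.mem_symmDiff, Finset.mem_union, Finset.mem_sdiff]
        tauto
      rw [hsd, Finset.card_union_of_disjoint]
      exact Finset.disjoint_left.2 fun {y} hy hy' => hT'mem y hy' (hTmem y hy)
  · rintro ⟨C, hv, rfl⟩
    refine ⟨A \ C, C \ A, Finset.sdiff_subset, fun y hy =>
      Finset.mem_compl.2 (Finset.mem_sdiff.1 hy).2, ?_, ?_⟩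
    · have h1 : A \ (A \ C) ∪ (C \ A) = C := by
        ext y
        simp only [Finset.mem_union, Finset.mem_sdiff]
        tauto
      have h2 : Aᶜ \ (C \ A) ∪ (A \ C) = Cᶜ := by
        ext y
        simp only [Finset.mem_union, Finset.mem_sdiff, Finset.mem_compl]
        tauto
      rw [h1, h2]; exact hv
    · rw [symmDiff_def, Finset.sup_eq_union,
        Finset.card_union_of_disjoint disjoint_sdiff_sdiff]

lemma flipDist_le (v : Finset α → ℝ) (A B : Finset α) :
    flipDist v A ≤ flipDist v B + (symmDiff A B).card := by
  obtain ⟨C, hC, hcard⟩ := Nat.sInf_mem (flipDist_set_nonempty v B)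
  have hf : flipDist v B = (symmDiff B C).card := hcard
  calc flipDist v A ≤ (symmDiff A C).card := Nat.sInf_le ⟨C, hC, rfl⟩
    _ ≤ ((symmDiff A B) ∪ (symmDiff B C)).card :=
        Finset.card_le_card (symmDiff_triangle A B C)
    _ ≤ (symmDiff A B).card + (symmDiff B C).card := Finset.card_union_le _ _
    _ = flipDist v B + (symmDiff A B).card := by rw [hf]; ring

lemma flipDist_self_zero (v : Finset α → ℝ) (A : Finset α) (h : v A ≤ v Aᶜ) :
    flipDist v A = 0 :=
  Nat.eq_zero_of_le_zero (Nat.sInf_le ⟨A, h, by simp⟩)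

lemma transferImbalance_compl (v : Finset α → ℝ) (A : Finset α) :
    transferImbalance v A Aᶜ = max (flipDist v A) (flipDist v Aᶜ) := by
  unfold transferImbalance
  split_ifs with h
  · rw [transferAux_compl, flipDist_self_zero v Aᶜ (by simpa using h)]
    simp
  · have := transferAux_compl v Aᶜ
    rw [compl_compl] at this
    rw [this, flipDist_self_zero v A (le_of_lt (not_le.1 h))]
    simp

end Aux

/-- **1-Lipschitzness of the transfer imbalance.**
For every valuation `v`, set `S` and item `x`,
`|T_v(S, Sᶜ) - T_v(S △ {x}, (S △ {x})ᶜ)| ≤ 1`. -/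
theorem transferImbalance_lipschitz
    {α : Type*} [Fintype α] [DecidableEq α]
    (v : Finset α → ℝ) (S : Finset α) (x : α) :
    |(transferImbalance v S Sᶜ : ℤ) -
      (transferImbalance v (symmDiff S {x}) (symmDiff S {x})ᶜ : ℤ)| ≤ 1 := by
  set B := symmDiff S {x} with hB
  have hSB : (symmDiff S B).card = 1 := by
    rw [hB, symmDiff_symmDiff_cancel_left, Finset.card_singleton]
  have hSBc : (symmDiff Sᶜ Bᶜ).card = 1 := by
    rw [compl_symmDiff_compl, hSB]
  have key : ∀ C D : Finset α, (symmDiff C D).card = 1 →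
      |(flipDist v C : ℤ) - (flipDist v D : ℤ)| ≤ 1 := by
    intro C D h
    rw [abs_sub_le_iff]
    constructor
    · have := flipDist_le v C D
      rw [h] at this
      omega
    · have := flipDist_le v D C
      rw [symmDiff_comm, h] at this
      omega
  rw [transferImbalance_compl, transferImbalance_compl]
  push_cast [Nat.cast_max]
  calc |(max (flipDist v S : ℤ) (flipDist v Sᶜ : ℤ)) -
        (max (flipDist v B : ℤ) (flipDist v Bᶜ : ℤ))| ≤
      max |(flipDist v S : ℤ) - flipDist v B| |(flipDist v Sᶜ : ℤ) - flipDist v Bᶜ| :=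
        abs_max_sub_max_le_max _ _ _ _
    _ ≤ 1 := max_le (key S B hSB) (key Sᶜ Bᶜ hSBc)
end

section
/- Let v : 2^M → ℝ be a valuation function with marginals bounded by 1, and let A, B ⊆ M be disjoint. Then T_v(A, B) ≥ |v(A) − v(B)| / 2. -/
lemma union_bound {α : Type*} [DecidableEq α] (v : Finset α → ℝ)
    (hv : ∀ (S : Finset α) (j : α), |v (insert j S) - v S| ≤ 1) :
    ∀ (D Y : Finset α), |v (Y ∪ D) - v Y| ≤ D.card := by
  intro D
  induction D using Finset.induction_on with
  | empty => intro Y; simp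
  | @insert a D ha ih =>
    intro Y
    have h1 : Y ∪ insert a D = insert a (Y ∪ D) := Finset.union_insert _ _ _
    calc |v (Y ∪ insert a D) - v Y|
        ≤ |v (insert a (Y ∪ D)) - v (Y ∪ D)| + |v (Y ∪ D) - v Y| := by
          rw [h1]; exact abs_sub_le _ _ _
      _ ≤ 1 + D.card := add_le_add (hv _ _) (ih Y)
      _ = (insert a D).card := by rw [Finset.card_insert_of_notMem ha]; push_cast; ring

lemma aux_bound {α : Type*} [Fintype α] [DecidableEq α]
    (v : Finset α → ℝ)
    (hv : ∀ (S : Finset α) (j : α), |v (insert j S) - v S| ≤ 1)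
    (A B : Finset α) (h : v B ≤ v A) :
    v A - v B ≤ 2 * (transferAux v A B : ℝ) := by
  have hne : {t : ℕ | ∃ S S' : Finset α, S ⊆ A ∧ S' ⊆ B ∧
      v ((A \ S) ∪ S') ≤ v ((B \ S') ∪ S) ∧ t = S.card + S'.card}.Nonempty :=
    ⟨A.card + B.card, A, B, subset_rfl, subset_rfl, by simpa using h, rfl⟩
  obtain ⟨S, S', hS, hS', hle, ht⟩ := Nat.sInf_mem hne
  have hA : |v A - v ((A \ S) ∪ S')| ≤ (S.card : ℝ) + S'.card := by
    calc |v A - v ((A \ S) ∪ S')|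
        ≤ |v A - v (A \ S)| + |v (A \ S) - v ((A \ S) ∪ S')| := abs_sub_le _ _ _
      _ ≤ (S.card : ℝ) + S'.card := by
          refine add_le_add ?_ ?_
          · have := union_bound v hv S (A \ S)
            rwa [Finset.sdiff_union_of_subset hS] at this
          · have := union_bound v hv S' (A \ S)
            rwa [abs_sub_comm] at this
  have hB : |v B - v ((B \ S') ∪ S)| ≤ (S.card : ℝ) + S'.card := by
    calc |v B - v ((B \ S') ∪ S)|
        ≤ |v B - v (B \ S')| + |v (B \ S') - v ((B \ S') ∪ S)| := abs_sub_le _ _ _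
      _ ≤ (S.card : ℝ) + S'.card := by
          rw [add_comm (S.card : ℝ)]
          refine add_le_add ?_ ?_
          · have := union_bound v hv S' (B \ S')
            rwa [Finset.sdiff_union_of_subset hS'] at this
          · have := union_bound v hv S (B \ S')
            rwa [abs_sub_comm] at this
  have h1 := abs_le.mp hA
  have h2 := abs_le.mp hB
  have hcard : (transferAux v A B : ℝ) = (S.card : ℝ) + S'.card := by
    unfold transferAux
    rw [ht]; push_cast; ring
  rw [hcard]
  linarith [h1.2, h2.1, hle]

/-- **Transfer imbalance dominates half the value gap.**
If `v` has marginals bounded by `1` and `A, B` are disjoint, then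
`T_v(A, B) ≥ |v A - v B| / 2`. -/
theorem transferImbalance_ge_half_gap
    {α : Type*} [Fintype α] [DecidableEq α]
    (v : Finset α → ℝ)
    (hv : ∀ (S : Finset α) (j : α), |v (insert j S) - v S| ≤ 1)
    (A B : Finset α) (hAB : Disjoint A B) :
    |v A - v B| / 2 ≤ (transferImbalance v A B : ℝ) := by
  unfold transferImbalance
  split_ifs with h
  · rw [abs_of_nonneg (by linarith)]
    have := aux_bound v hv A B h
    linarith
  · push_neg at h
    rw [abs_of_nonpos (by linarith)]
    have := aux_bound v hv B A h.le
    linarith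
end

section
/- There exists a constant c > 0 such that for every k ≥ 2 and every n, there exist a finite set M and n additive valuation functions v_1, …, v_n : 2^M → ℝ with marginals bounded by 1 (i.e., v_i(S) = ∑_{j∈S} a_{ij} with |a_{ij}| ≤ 1) whose k-color transfer-discrepancy satisfies disc^T(V, k) ≥ c·√n. -/
/-- Lower bound for `transferAux` in terms of the value gap, for additive
valuations with weights bounded by 1 on disjoint bundles. -/
lemma transferAux_lb {α : Type*} [Fintype α] [DecidableEq α]
    (a : α → ℝ) (ha : ∀ j, |a j| ≤ 1) (A B : Finset α) (hd : Disjoint A B)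
    (hle : (∑ j ∈ B, a j) ≤ ∑ j ∈ A, a j) :
    (∑ j ∈ A, a j) - (∑ j ∈ B, a j) ≤
      2 * (transferAux (fun S => ∑ j ∈ S, a j) A B : ℝ) := by
  have hne : {t : ℕ | ∃ S S' : Finset α, S ⊆ A ∧ S' ⊆ B ∧
      (∑ j ∈ (A \ S) ∪ S', a j) ≤ (∑ j ∈ (B \ S') ∪ S, a j) ∧
      t = S.card + S'.card}.Nonempty := by
    refine ⟨A.card + B.card, A, B, le_refl _, le_refl _, ?_, rfl⟩
    simpa [Finset.sdiff_self] using hle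
  have hmem := Nat.sInf_mem hne
  obtain ⟨S, S', hSA, hS'B, hfeas, hT⟩ := hmem
  have hdisj1 : Disjoint (A \ S) S' := by
    refine Finset.disjoint_left.mpr fun x hx hx' => ?_
    exact (Finset.disjoint_left.mp hd (Finset.mem_sdiff.mp hx).1 (hS'B hx'))
  have hdisj2 : Disjoint (B \ S') S := by
    refine Finset.disjoint_left.mpr fun x hx hx' => ?_
    exact (Finset.disjoint_left.mp hd.symm (Finset.mem_sdiff.mp hx).1 (hSA hx'))
  rw [Finset.sum_union hdisj1, Finset.sum_union hdisj2,
    Finset.sum_sdiff_eq_sub hSA, Finset.sum_sdiff_eq_sub hS'B] at hfeas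
  have hS_le : (∑ j ∈ S, a j) ≤ S.card := by
    calc (∑ j ∈ S, a j) ≤ ∑ _j ∈ S, (1:ℝ) :=
      Finset.sum_le_sum fun j _ => (abs_le.mp (ha j)).2
    _ = S.card := by simp
  have hS'_ge : -(S'.card : ℝ) ≤ ∑ j ∈ S', a j := by
    calc -(S'.card : ℝ) = ∑ _j ∈ S', (-1:ℝ) := by simp
    _ ≤ ∑ j ∈ S', a j := Finset.sum_le_sum fun j _ => (abs_le.mp (ha j)).1
  have hcast : (transferAux (fun S => ∑ j ∈ S, a j) A B : ℝ)
      = (S.card : ℝ) + (S'.card : ℝ) := by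
    have : transferAux (fun S => ∑ j ∈ S, a j) A B = S.card + S'.card := hT
    rw [this]; push_cast; ring
  rw [hcast]
  linarith

lemma transferImbalance_lb {α : Type*} [Fintype α] [DecidableEq α]
    (a : α → ℝ) (ha : ∀ j, |a j| ≤ 1) (A B : Finset α) (hd : Disjoint A B) :
    |(∑ j ∈ A, a j) - ∑ j ∈ B, a j| ≤
      2 * (transferImbalance (fun S => ∑ j ∈ S, a j) A B : ℝ) := by
  unfold transferImbalance
  by_cases h : (fun S => ∑ j ∈ S, a j) B ≤ (fun S => ∑ j ∈ S, a j) A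
  · rw [if_pos h]
    have h' : (∑ j ∈ B, a j) ≤ ∑ j ∈ A, a j := h
    rw [abs_of_nonneg (sub_nonneg.mpr h')]
    exact transferAux_lb a ha A B hd h'
  · rw [if_neg h]
    have h' : (∑ j ∈ A, a j) ≤ ∑ j ∈ B, a j := le_of_not_ge h
    rw [abs_sub_comm, abs_of_nonneg (sub_nonneg.mpr h')]
    exact transferAux_lb a ha B A hd.symm h'


/-- The sign character on booleans. -/
def chiB (b : Bool) : ℝ := if b then -1 else 1

/-- Walsh matrix entry indexed by two bit-vectors. -/
def wal {t : ℕ} (p x : Fin t → Bool) : ℝ := ∏ s : Fin t, chiB (p s && x s)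

lemma chiB_abs (b : Bool) : |chiB b| = 1 := by cases b <;> simp [chiB]

lemma wal_abs {t : ℕ} (p x : Fin t → Bool) : |wal p x| = 1 := by
  rw [wal, Finset.abs_prod]
  simp [chiB_abs]

lemma chiB_mul (a b : Bool) : chiB a * chiB b = chiB (xor a b) := by
  cases a <;> cases b <;> norm_num [chiB]

/-- Sum of a nontrivial Walsh character over all bit-vectors vanishes. -/
lemma sum_wal_ne {t : ℕ} (d : Fin t → Bool) (hd : d ≠ fun _ => false) :
    ∑ x : Fin t → Bool, wal d x = 0 := by
  obtain ⟨s₀, hs₀⟩ : ∃ s₀, d s₀ = true := by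
    by_contra h
    push_neg at h
    exact hd (funext fun s => by simpa using h s)
  have hflip : ∀ x : Fin t → Bool, wal d (Function.update x s₀ (!(x s₀))) = - wal d x := by
    intro x
    have h1 : wal d x
        = chiB (d s₀ && x s₀) * ∏ s ∈ Finset.univ.erase s₀, chiB (d s && x s) :=
      (Finset.mul_prod_erase _ _ (Finset.mem_univ s₀)).symm
    have h2 : wal d (Function.update x s₀ (!(x s₀)))
        = chiB (d s₀ && (Function.update x s₀ (!(x s₀))) s₀) *
            ∏ s ∈ Finset.univ.erase s₀, chiB (d s && (Function.update x s₀ (!(x s₀))) s) :=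
      (Finset.mul_prod_erase _ _ (Finset.mem_univ s₀)).symm
    rw [Function.update_self] at h2
    have h3 : ∏ s ∈ Finset.univ.erase s₀, chiB (d s && (Function.update x s₀ (!(x s₀))) s)
        = ∏ s ∈ Finset.univ.erase s₀, chiB (d s && x s) := by
      refine Finset.prod_congr rfl fun s hs => ?_
      have : s ≠ s₀ := (Finset.mem_erase.mp hs).1
      rw [Function.update_of_ne this]
    have h4 : chiB (d s₀ && !(x s₀)) = - chiB (d s₀ && x s₀) := by
      rw [hs₀]
      cases x s₀ <;> norm_num [chiB]
    rw [h2, h3, h4, h1]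
    ring
  refine Finset.sum_involution
    (fun x _ => Function.update x s₀ (!(x s₀))) (fun x _ => ?_) (fun x _ _ => ?_)
    (fun x _ => Finset.mem_univ _) (fun x _ => ?_)
  · rw [hflip x]; ring
  · intro hcontra
    have := congrFun hcontra s₀
    simp at this
  · funext s
    by_cases hss : s = s₀
    · subst hss; simp
    · simp [Function.update_of_ne hss]

/-- Orthogonality of Walsh rows. -/
lemma wal_ortho {t : ℕ} (x y : Fin t → Bool) :
    ∑ q : Fin t → Bool, wal q x * wal q y = if x = y then ((2:ℝ)^t) else 0 := by
  have hq : ∀ q : Fin t → Bool,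
      wal q x * wal q y = wal (fun s => xor (x s) (y s)) q := by
    intro q
    rw [wal, wal, wal, ← Finset.prod_mul_distrib]
    refine Finset.prod_congr rfl fun s _ => ?_
    rw [chiB_mul]
    congr 1
    cases x s <;> cases y s <;> cases q s <;> rfl
  simp only [hq]
  by_cases h : x = y
  · subst h
    have : (fun s => xor (x s) (x s)) = fun _ : Fin t => false := by
      funext s; cases x s <;> rfl
    rw [this, if_pos rfl]
    have hone : ∀ q : Fin t → Bool, wal (fun _ : Fin t => false) q = 1 := by
      intro q; rw [wal]; simp [chiB]
    simp only [hone, Finset.sum_const, Finset.card_univ, nsmul_eq_mul, mul_one]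
    rw [Fintype.card_fun]
    simp
  · rw [if_neg h]
    refine sum_wal_ne _ fun hc => h ?_
    funext s
    have := congrFun hc s
    cases hx : x s <;> cases hy : y s <;> simp [hx, hy] at this ⊢


def encW (t : ℕ) : (Fin t → Bool) ≃ Fin (2 ^ t) :=
  (Equiv.arrowCongr (Equiv.refl (Fin t)) finTwoEquiv.symm).trans finFunctionFinEquiv

/-- Column type of an item. -/
def colW (t r : ℕ) (j : Fin (2 ^ t * r)) : Fin t → Bool :=
  (encW t).symm (finProdFinEquiv.symm j).1

lemma colW_fiber_card (t r : ℕ) (x : Fin t → Bool) :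
    (Finset.univ.filter fun j => colW t r j = x).card = r := by
  classical
  rw [Finset.card_filter]
  rw [← Equiv.sum_comp (finProdFinEquiv (m := 2^t) (n := r))
      (fun j => if colW t r j = x then (1:ℕ) else 0)]
  have : ∀ p : Fin (2^t) × Fin r,
      (if colW t r (finProdFinEquiv p) = x then (1:ℕ) else 0)
        = if (encW t).symm p.1 = x then 1 else 0 := by
    intro p
    simp [colW]
  simp only [this]
  rw [Fintype.sum_prod_type]
  have h2 : ∀ y : Fin (2^t),
      (∑ _c : Fin r, if (encW t).symm y = x then (1:ℕ) else 0)
        = if y = encW t x then r else 0 := by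
    intro y
    rcases eq_or_ne y (encW t x) with hy | hy
    · subst hy; simp
    · have hne : (encW t).symm y ≠ x := fun hc => hy (by rw [← hc]; simp)
      simp [hne, hy]
  simp only [h2]
  simp

noncomputable def decW (t n : ℕ) (i : Fin n) : Fin t → Bool :=
  (encW t).symm ⟨i.val % 2^t, Nat.mod_lt _ (Nat.two_pow_pos t)⟩

lemma decW_spec (t n : ℕ) (hNn : 2^t ≤ n) (q : Fin t → Bool) :
    decW t n ⟨((encW t) q).val, lt_of_lt_of_le ((encW t) q).isLt hNn⟩ = q := by
  have h1 : (⟨((encW t) q).val % 2^t, Nat.mod_lt _ (Nat.two_pow_pos t)⟩ : Fin (2^t))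
      = (encW t) q := by
    apply Fin.ext
    simp [Nat.mod_eq_of_lt ((encW t) q).isLt]
  rw [decW]
  simp only [h1, Equiv.symm_apply_apply]

/-- **Lower bound on the `k`-color transfer-discrepancy.**
There is a constant `c > 0` such that for every `k ≥ 2` and every `n`, there are
a finite item set `Fin m` and `n` additive valuations `v i S = ∑_{j ∈ S} a i j`
with `|a i j| ≤ 1` such that for every `k`-coloring `χ` the largest transfer
imbalance between two color classes is at least `c * √n`; i.e.
`discᵀ(V, k) ≥ c * √n`. -/
theorem transfer_discrepancy_lower_bound :
    ∃ c : ℝ, 0 < c ∧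
      ∀ (k n : ℕ), 2 ≤ k →
        ∃ (m : ℕ) (a : Fin n → Fin m → ℝ),
          (∀ (i : Fin n) (j : Fin m), |a i j| ≤ 1) ∧
          ∀ χ : Fin m → Fin k,
            c * Real.sqrt n ≤
              ⨆ ℓ : Fin k, ⨆ ℓ' : Fin k, ⨆ i : Fin n,
                (transferImbalance (fun S => ∑ j ∈ S, a i j)
                  (Finset.univ.filter fun j => χ j = ℓ)
                  (Finset.univ.filter fun j => χ j = ℓ') : ℝ) := by
  classical
  refine ⟨1/9, by norm_num, ?_⟩
  intro k n hk
  haveI hkne : Nonempty (Fin k) := ⟨⟨0, by omega⟩⟩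
  rcases Nat.eq_zero_or_pos n with hn0 | hn0
  · subst hn0
    refine ⟨0, fun _ _ => 0, fun i j => by simp, fun χ => ?_⟩
    have h0 : ∀ (g : Fin 0 → ℝ), (⨆ i, g i) = 0 := fun g => by
      rw [iSup, Set.range_eq_empty, Real.sSup_empty]
    simp only [h0, ciSup_const]
    simp
  · -- main case
    set t := Nat.log 2 n with ht
    have hNn : 2 ^ t ≤ n := Nat.pow_log_le_self 2 (by omega)
    have hn2N : (n : ℝ) ≤ 2 * (2:ℝ) ^ t := by
      have h := Nat.lt_pow_succ_log_self (by norm_num : 1 < 2) n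
      have h2 : n < 2 * 2 ^ t := by
        rw [← ht, pow_succ] at h
        omega
      calc (n:ℝ) ≤ ((2 * 2^t : ℕ) : ℝ) := by exact_mod_cast h2.le
      _ = 2 * (2:ℝ)^t := by push_cast; ring
    set r := k / 2 with hr
    have hr1 : 1 ≤ r := by omega
    have h2r : 2 * r ≤ k := by omega
    have h3r : k ≤ 3 * r := by omega
    have hNpos : (0:ℝ) < (2:ℝ)^t := by positivity
    have hkR : (0:ℝ) < (k:ℝ) := by exact_mod_cast (by omega : 0 < k)
    refine ⟨2^t * r, fun i j => wal (decW t n i) (colW t r j),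
      fun i j => le_of_eq (wal_abs _ _), ?_⟩
    intro χ
    -- the counts of column-types within color classes
    set z : Fin k → (Fin t → Bool) → ℕ :=
      fun ℓ x => (Finset.univ.filter fun j => χ j = ℓ ∧ colW t r j = x).card with hz
    have hzsum : ∀ x, ∑ ℓ, (z ℓ x : ℝ) = r := by
      intro x
      have hnat : ∑ ℓ, z ℓ x = r := by
        have hcard := colW_fiber_card t r x
        conv_rhs => rw [← hcard]
        rw [Finset.card_eq_sum_card_fiberwise
          (f := χ) (t := Finset.univ) (fun _ _ => Finset.mem_univ _)]
        refine Finset.sum_congr rfl fun ℓ _ => ?_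
        simp only [hz]
        congr 1
        ext j
        simp only [Finset.mem_filter, Finset.mem_univ, true_and]
        tauto
      calc ∑ ℓ, (z ℓ x : ℝ) = ((∑ ℓ, z ℓ x : ℕ) : ℝ) := by push_cast; rfl
      _ = r := by rw [hnat]
    set β : ℝ := (r:ℝ)/(k:ℝ) with hβ
    have hβlow : 1/3 ≤ β := by
      rw [hβ, le_div_iff₀ hkR]
      have : (k:ℝ) ≤ 3 * r := by exact_mod_cast h3r
      linarith
    have hβhigh : β ≤ 1/2 := by
      rw [hβ, div_le_iff₀ hkR]
      have : 2 * (r:ℝ) ≤ k := by exact_mod_cast h2r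
      linarith
    have hA : ∀ (ℓ : Fin k) (x : Fin t → Bool), (1:ℝ)/9 ≤ ((z ℓ x : ℝ) - β)^2 := by
      intro ℓ x
      rcases Nat.eq_zero_or_pos (z ℓ x) with h | h
      · rw [h]
        push_cast
        nlinarith
      · have h1 : (1:ℝ) ≤ (z ℓ x : ℝ) := by exact_mod_cast h
        nlinarith
    have hcardX : (Fintype.card (Fin t → Bool) : ℝ) = (2:ℝ)^t := by
      rw [Fintype.card_fun]
      push_cast
      simp
    have hS : ∀ ℓ : Fin k, (2:ℝ)^t/9 ≤ ∑ x : Fin t → Bool, ((z ℓ x : ℝ) - β)^2 := by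
      intro ℓ
      calc (2:ℝ)^t/9 = (Fintype.card (Fin t → Bool) : ℝ) * (1/9) := by
            rw [hcardX]; ring
      _ = ∑ _x : Fin t → Bool, (1:ℝ)/9 := by
            rw [Finset.sum_const, Finset.card_univ, nsmul_eq_mul]
      _ ≤ _ := Finset.sum_le_sum fun x _ => hA ℓ x
    set ℓ₁ : Fin k := ⟨0, by omega⟩ with hℓ₁
    -- Cauchy–Schwarz: pass from deviation-from-mean to pairwise deviation
    have hC : ∀ x, (k:ℝ) * ((z ℓ₁ x : ℝ) - β)^2
        ≤ ∑ ℓ' : Fin k, ((z ℓ₁ x : ℝ) - (z ℓ' x : ℝ))^2 := by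
      intro x
      have hcs := Finset.sum_mul_sq_le_sq_mul_sq Finset.univ
        (fun ℓ' : Fin k => ((z ℓ₁ x : ℝ) - (z ℓ' x : ℝ))) (fun _ => (1:ℝ))
      simp only [mul_one, one_pow, Finset.sum_const, Finset.card_univ,
        Fintype.card_fin, nsmul_eq_mul] at hcs
      have hsum1 : ∑ ℓ' : Fin k, ((z ℓ₁ x : ℝ) - (z ℓ' x : ℝ))
          = (k:ℝ) * ((z ℓ₁ x : ℝ) - β) := by
        rw [Finset.sum_sub_distrib, hzsum x, Finset.sum_const, Finset.card_univ,
          Fintype.card_fin, nsmul_eq_mul, hβ]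
        field_simp
      rw [hsum1] at hcs
      have hQnn : (0:ℝ) ≤ ∑ ℓ' : Fin k, ((z ℓ₁ x : ℝ) - (z ℓ' x : ℝ))^2 :=
        Finset.sum_nonneg fun _ _ => sq_nonneg _
      nlinarith
    have hsumC : (k:ℝ) * (∑ x : Fin t → Bool, ((z ℓ₁ x : ℝ) - β)^2)
        ≤ ∑ ℓ' : Fin k, ∑ x : Fin t → Bool, ((z ℓ₁ x : ℝ) - (z ℓ' x : ℝ))^2 := by
      rw [Finset.mul_sum]
      calc ∑ x : Fin t → Bool, (k:ℝ) * ((z ℓ₁ x : ℝ) - β)^2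
          ≤ ∑ x : Fin t → Bool, ∑ ℓ' : Fin k, ((z ℓ₁ x : ℝ) - (z ℓ' x : ℝ))^2 :=
            Finset.sum_le_sum fun x _ => hC x
      _ = _ := Finset.sum_comm
    obtain ⟨ℓ₂, -, hℓ₂⟩ : ∃ ℓ₂ ∈ Finset.univ,
        (∑ x : Fin t → Bool, ((z ℓ₁ x : ℝ) - β)^2)
          ≤ ∑ x : Fin t → Bool, ((z ℓ₁ x : ℝ) - (z ℓ₂ x : ℝ))^2 := by
      apply Finset.exists_le_of_sum_le Finset.univ_nonempty
      calc ∑ _ℓ' : Fin k, (∑ x : Fin t → Bool, ((z ℓ₁ x : ℝ) - β)^2)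
          = (k:ℝ) * (∑ x : Fin t → Bool, ((z ℓ₁ x : ℝ) - β)^2) := by
            rw [Finset.sum_const, Finset.card_univ, Fintype.card_fin, nsmul_eq_mul]
      _ ≤ _ := hsumC
    have hQ : (2:ℝ)^t/9 ≤ ∑ x : Fin t → Bool, ((z ℓ₁ x : ℝ) - (z ℓ₂ x : ℝ))^2 :=
      le_trans (hS ℓ₁) hℓ₂
    have hne12 : ℓ₁ ≠ ℓ₂ := by
      intro he
      rw [← he] at hQ
      simp only [sub_self] at hQ
      simp at hQ
      linarith
    set u : (Fin t → Bool) → ℝ := fun x => (z ℓ₁ x : ℝ) - (z ℓ₂ x : ℝ) with hu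
    have hQu : (2:ℝ)^t/9 ≤ ∑ x : Fin t → Bool, (u x)^2 := hQ
    -- Walsh expansion
    have hexp : ∑ q : Fin t → Bool, (∑ x : Fin t → Bool, wal q x * u x)^2
        = (2:ℝ)^t * ∑ x : Fin t → Bool, (u x)^2 := by
      have step1 : ∀ q : Fin t → Bool,
          (∑ x : Fin t → Bool, wal q x * u x)^2
            = ∑ x : Fin t → Bool, ∑ y : Fin t → Bool,
                (wal q x * u x) * (wal q y * u y) := by
        intro q; rw [sq, Finset.sum_mul_sum]
      simp only [step1]
      rw [Finset.sum_comm]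
      have step2 : ∀ x : Fin t → Bool,
          ∑ q : Fin t → Bool, ∑ y : Fin t → Bool, (wal q x * u x) * (wal q y * u y)
            = ∑ y : Fin t → Bool, (u x * u y) * ∑ q : Fin t → Bool, wal q x * wal q y := by
        intro x
        rw [Finset.sum_comm]
        refine Finset.sum_congr rfl fun y _ => ?_
        rw [Finset.mul_sum]
        refine Finset.sum_congr rfl fun q _ => by ring
      simp only [step2, wal_ortho]
      have step3 : ∀ x : Fin t → Bool,
          ∑ y : Fin t → Bool, (u x * u y) * (if x = y then ((2:ℝ)^t) else 0)
            = (u x)^2 * (2:ℝ)^t := by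
        intro x
        simp only [mul_ite, mul_zero]
        rw [Finset.sum_ite_eq]
        simp [sq]
      simp only [step3]
      rw [← Finset.sum_mul, mul_comm]
    obtain ⟨q₀, -, hq₀⟩ : ∃ q₀ ∈ Finset.univ,
        (2:ℝ)^t/9 ≤ (∑ x : Fin t → Bool, wal q₀ x * u x)^2 := by
      apply Finset.exists_le_of_sum_le Finset.univ_nonempty
      calc ∑ _q : Fin t → Bool, (2:ℝ)^t/9
          = (Fintype.card (Fin t → Bool) : ℝ) * ((2:ℝ)^t/9) := by
            rw [Finset.sum_const, Finset.card_univ, nsmul_eq_mul]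
      _ = (2:ℝ)^t * ((2:ℝ)^t/9) := by rw [hcardX]
      _ ≤ (2:ℝ)^t * ∑ x : Fin t → Bool, (u x)^2 :=
            mul_le_mul_of_nonneg_left hQu (le_of_lt hNpos)
      _ = _ := hexp.symm
    have hgap : Real.sqrt ((2:ℝ)^t) / 3 ≤ |∑ x : Fin t → Bool, wal q₀ x * u x| := by
      have h1 : Real.sqrt ((2:ℝ)^t/9)
          ≤ Real.sqrt ((∑ x : Fin t → Bool, wal q₀ x * u x)^2) := Real.sqrt_le_sqrt hq₀
      rw [Real.sqrt_sq_eq_abs] at h1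
      have h2 : Real.sqrt ((2:ℝ)^t/9) = Real.sqrt ((2:ℝ)^t)/3 := by
        rw [show ((2:ℝ)^t/9) = ((2:ℝ)^t) * (1/3)^2 by ring,
          Real.sqrt_mul (le_of_lt hNpos), Real.sqrt_sq (by norm_num : (0:ℝ) ≤ 1/3)]
        ring
      linarith
    -- the designated valuation index
    set i₀ : Fin n := ⟨((encW t) q₀).val, lt_of_lt_of_le ((encW t) q₀).isLt hNn⟩ with hi₀
    have hdec : decW t n i₀ = q₀ := decW_spec t n hNn q₀
    -- value identity
    have hval : ∀ (ℓ : Fin k) (p : Fin t → Bool),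
        (∑ j ∈ Finset.univ.filter (fun j : Fin (2^t*r) => χ j = ℓ), wal p (colW t r j))
          = ∑ x : Fin t → Bool, (z ℓ x : ℝ) * wal p x := by
      intro ℓ p
      rw [← Finset.sum_fiberwise_of_maps_to (g := colW t r) (t := Finset.univ)
        (fun j _ => Finset.mem_univ _) (fun j => wal p (colW t r j))]
      refine Finset.sum_congr rfl fun x _ => ?_
      have hcongr : ∀ j ∈ (Finset.univ.filter (fun j : Fin (2^t*r) => χ j = ℓ)).filter
          (fun j => colW t r j = x), wal p (colW t r j) = wal p x := by
        intro j hj; rw [(Finset.mem_filter.mp hj).2]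
      rw [Finset.sum_congr rfl hcongr, Finset.sum_const, nsmul_eq_mul]
      congr 1
      rw [Finset.filter_filter, hz]
    set A : Finset (Fin (2^t*r)) := Finset.univ.filter (fun j => χ j = ℓ₁) with hA'
    set B : Finset (Fin (2^t*r)) := Finset.univ.filter (fun j => χ j = ℓ₂) with hB'
    have hAB : Disjoint A B := by
      refine Finset.disjoint_left.mpr fun j hj hj' => hne12 ?_
      rw [hA'] at hj; rw [hB'] at hj'
      rw [← (Finset.mem_filter.mp hj).2, ← (Finset.mem_filter.mp hj').2]
    have hgapv : (∑ j ∈ A, wal q₀ (colW t r j)) - (∑ j ∈ B, wal q₀ (colW t r j))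
        = ∑ x : Fin t → Bool, wal q₀ x * u x := by
      rw [hA', hB', hval ℓ₁ q₀, hval ℓ₂ q₀, ← Finset.sum_sub_distrib]
      exact Finset.sum_congr rfl fun x _ => by simp only [hu]; ring
    have hTlb := transferImbalance_lb (fun j => wal q₀ (colW t r j))
      (fun j => le_of_eq (wal_abs _ _)) A B hAB
    rw [hgapv] at hTlb
    -- conclude
    have hkey : (1:ℝ)/9 * Real.sqrt n
        ≤ (transferImbalance (fun S => ∑ j ∈ S, wal (decW t n i₀) (colW t r j)) A B : ℝ) := by
      have e1 : (fun S => ∑ j ∈ S, wal (decW t n i₀) (colW t r j))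
          = (fun S => ∑ j ∈ S, wal q₀ (colW t r j)) := by rw [hdec]
      rw [e1]
      have hsq : Real.sqrt n ≤ Real.sqrt 2 * Real.sqrt ((2:ℝ)^t) := by
        rw [← Real.sqrt_mul (by norm_num : (0:ℝ) ≤ 2)]
        exact Real.sqrt_le_sqrt hn2N
      have hsqrt2 : Real.sqrt 2 ≤ 3/2 := by
        rw [show (3/2:ℝ) = Real.sqrt ((3/2)^2) by
          rw [Real.sqrt_sq (by norm_num : (0:ℝ) ≤ 3/2)]]
        exact Real.sqrt_le_sqrt (by norm_num)
      have hsN : (0:ℝ) ≤ Real.sqrt ((2:ℝ)^t) := Real.sqrt_nonneg _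
      -- √n/9 ≤ √N/6 ≤ |gap|/2 ≤ T
      have h6 : Real.sqrt ((2:ℝ)^t)/6 ≤ (transferImbalance
          (fun S => ∑ j ∈ S, wal q₀ (colW t r j)) A B : ℝ) := by
        have := hTlb
        linarith [hgap]
      have h9 : (1:ℝ)/9 * Real.sqrt n ≤ Real.sqrt ((2:ℝ)^t)/6 := by
        have hmul : Real.sqrt 2 * Real.sqrt ((2:ℝ)^t) ≤ (3/2) * Real.sqrt ((2:ℝ)^t) :=
          mul_le_mul_of_nonneg_right hsqrt2 hsN
        have : Real.sqrt n ≤ (3/2) * Real.sqrt ((2:ℝ)^t) := le_trans hsq hmul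
        linarith
      linarith
    -- chain through the suprema
    have hfinal : (transferImbalance
        (fun S => ∑ j ∈ S, wal (decW t n i₀) (colW t r j)) A B : ℝ)
        ≤ ⨆ ℓ : Fin k, ⨆ ℓ' : Fin k, ⨆ i : Fin n,
            (transferImbalance (fun S => ∑ j ∈ S, wal (decW t n i) (colW t r j))
              (Finset.univ.filter fun j => χ j = ℓ)
              (Finset.univ.filter fun j => χ j = ℓ') : ℝ) := by
      rw [hA', hB']
      calc (transferImbalance (fun S => ∑ j ∈ S, wal (decW t n i₀) (colW t r j))
            (Finset.univ.filter fun j => χ j = ℓ₁)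
            (Finset.univ.filter fun j => χ j = ℓ₂) : ℝ)
          ≤ ⨆ i : Fin n, (transferImbalance
              (fun S => ∑ j ∈ S, wal (decW t n i) (colW t r j))
              (Finset.univ.filter fun j => χ j = ℓ₁)
              (Finset.univ.filter fun j => χ j = ℓ₂) : ℝ) :=
            le_ciSup (f := fun i : Fin n =>
              (transferImbalance (fun S => ∑ j ∈ S, wal (decW t n i) (colW t r j))
                (Finset.univ.filter fun j => χ j = ℓ₁)
                (Finset.univ.filter fun j => χ j = ℓ₂) : ℝ))
              (Set.Finite.bddAbove (Set.finite_range _)) i₀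
      _ ≤ ⨆ ℓ' : Fin k, ⨆ i : Fin n, (transferImbalance
              (fun S => ∑ j ∈ S, wal (decW t n i) (colW t r j))
              (Finset.univ.filter fun j => χ j = ℓ₁)
              (Finset.univ.filter fun j => χ j = ℓ') : ℝ) :=
            le_ciSup (f := fun ℓ' : Fin k => ⨆ i : Fin n,
              (transferImbalance (fun S => ∑ j ∈ S, wal (decW t n i) (colW t r j))
                (Finset.univ.filter fun j => χ j = ℓ₁)
                (Finset.univ.filter fun j => χ j = ℓ') : ℝ))
              (Set.Finite.bddAbove (Set.finite_range _)) ℓ₂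
      _ ≤ _ := le_ciSup (f := fun ℓ : Fin k => ⨆ ℓ' : Fin k, ⨆ i : Fin n,
            (transferImbalance (fun S => ∑ j ∈ S, wal (decW t n i) (colW t r j))
              (Finset.univ.filter fun j => χ j = ℓ)
              (Finset.univ.filter fun j => χ j = ℓ') : ℝ))
            (Set.Finite.bddAbove (Set.finite_range _)) ℓ₁
    exact le_trans hkey hfinal
end

section
/- An allocation A = (A_1, …, A_n) of a finite set M among n agents with valuations v_1, …, v_n : 2^M → ℝ is envy-freeable if and only if A maximizes total welfare over all reassignments of its bundles: for every permutation σ of [n], ∑_{i=1}^n v_i(A_i) ≥ ∑_{i=1}^n v_i(A_{σ(i)}). -/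
/-!
Write `u i j = v i (A j)`. Summing the envy-freeness inequalities
`u i (σ i) + p (σ i) ≤ u i i + p i` over `i` cancels the payments, so envy-freeable allocations
maximize welfare. Conversely, weight the edge `i → j` by the envy `u i j - u i i`. Welfare
maximality, applied to the cyclic permutation of a simple cycle, says that every simple cycle has
nonpositive weight. Then `p i`, the largest weight of a simple path starting at `i`, is a
nonnegative payment: extending a simple path from `j` by the edge `i → j` gives either a simple
path from `i` or a cycle through `i` followed by a simple path from `i`, and cutting out the cycle
does not decrease the weight.
-/

open Finset

theorem List.map_formPerm_eq_rotate_one {α : Type*} [DecidableEq α] {l : List α}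
    (hl : l.Nodup) : l.map l.formPerm = l.rotate 1 := by
  rw [← List.pmap_next_eq_rotate_one l hl, ← List.pmap_eq_map (H := fun _ h => h)]
  exact List.pmap_congr_left _ fun x hx _ _ => List.formPerm_apply_mem_eq_next hl x hx

section Walks

variable {ι : Type*} (w : ι → ι → ℝ)

def walkWeight (i : ι) (l : List ι) : ℝ :=
  (List.zipWith w (i :: l) l).sum

@[simp]
lemma walkWeight_nil (i : ι) : walkWeight w i [] = 0 := rfl

@[simp]
lemma walkWeight_cons (i j : ι) (l : List ι) :
    walkWeight w i (j :: l) = w i j + walkWeight w j l := by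
  simp [walkWeight]

lemma walkWeight_append (i : ι) (l₁ l₂ : List ι) :
    walkWeight w i (l₁ ++ l₂) =
      walkWeight w i l₁ + walkWeight w ((i :: l₁).getLast (List.cons_ne_nil _ _)) l₂ := by
  induction l₁ generalizing i with
  | nil => simp
  | cons j l₁ ih => simp [ih, add_assoc]

lemma walkWeight_append_cons_self (i : ι) (l₁ l₂ : List ι) :
    walkWeight w i (l₁ ++ i :: l₂) = walkWeight w i (l₁ ++ [i]) + walkWeight w i l₂ := by
  simpa using walkWeight_append w i (l₁ ++ [i]) l₂

lemma sum_toFinset_formPerm_eq_walkWeight [DecidableEq ι] {i : ι} {l : List ι}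
    (hl : (i :: l).Nodup) :
    ∑ x ∈ (i :: l).toFinset, w x ((i :: l).formPerm x) = walkWeight w i (l ++ [i]) := by
  have htrunc := List.zipWith_append (f := w) (l₁' := [i]) (l₂' := [])
    (show (i :: l).length = (l ++ [i]).length by simp)
  rw [List.sum_toFinset _ hl, ← List.zipWith_self (f := fun x y => w x ((i :: l).formPerm y)),
    ← List.zipWith_map_right, List.map_formPerm_eq_rotate_one hl, List.rotate_cons_succ, List.rotate_zero]
  simpa [walkWeight] using congrArg List.sum htrunc.symm

lemma walkWeight_append_nonpos_of_sum_perm_nonpos [Fintype ι] (hdiag : ∀ i, w i i = 0)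
    (hperm : ∀ σ : Equiv.Perm ι, ∑ i, w i (σ i) ≤ 0) {i : ι} {l : List ι} (hl : (i :: l).Nodup) :
    walkWeight w i (l ++ [i]) ≤ 0 := by
  classical
  rw [← sum_toFinset_formPerm_eq_walkWeight w hl, sum_subset (subset_univ _)
    fun x _ hx => by rw [List.formPerm_apply_of_notMem (by simpa using hx), hdiag]]
  exact hperm _

end Walks

section MaxPathWeight

variable {ι : Type*} [Finite ι] (w : ι → ι → ℝ)

instance (i : ι) : Finite {l : List ι // (i :: l).Nodup} := by
  classical
  have := Fintype.ofFinite ι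
  exact Finite.of_injective (fun l => (⟨i :: l.1, l.2⟩ : {l : List ι // l.Nodup}))
    fun a b h => Subtype.ext (List.cons_injective (congrArg Subtype.val h))

instance (i : ι) : Nonempty {l : List ι // (i :: l).Nodup} := ⟨⟨[], List.nodup_singleton i⟩⟩

noncomputable def maxPathWeight (i : ι) : ℝ :=
  ⨆ l : {l : List ι // (i :: l).Nodup}, walkWeight w i l

lemma walkWeight_le_maxPathWeight {i : ι} {l : List ι} (hl : (i :: l).Nodup) :
    walkWeight w i l ≤ maxPathWeight w i :=
  le_ciSup (f := fun l : {l : List ι // (i :: l).Nodup} => walkWeight w i l)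
    (Set.finite_range _).bddAbove ⟨l, hl⟩

lemma maxPathWeight_nonneg (i : ι) : 0 ≤ maxPathWeight w i :=
  walkWeight_le_maxPathWeight w (List.nodup_singleton i)

lemma add_maxPathWeight_le (hcyc : ∀ i l, (i :: l).Nodup → walkWeight w i (l ++ [i]) ≤ 0)
    (i j : ι) : w i j + maxPathWeight w j ≤ maxPathWeight w i := by
  rw [← le_sub_iff_add_le']
  refine ciSup_le fun ⟨l, hl⟩ => ?_
  rw [le_sub_iff_add_le', ← walkWeight_cons]
  by_cases hi : i ∈ j :: l
  · obtain ⟨l₁, l₂, hsplit⟩ := List.append_of_mem hi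
    rw [hsplit, List.nodup_middle] at hl
    rw [hsplit, walkWeight_append_cons_self]
    have hl₁ : (i :: l₁).Nodup := hl.sublist ((List.sublist_append_left _ _).cons_cons i)
    have hl₂ : (i :: l₂).Nodup := hl.sublist ((List.sublist_append_right _ _).cons_cons i)
    linarith [hcyc i l₁ hl₁, walkWeight_le_maxPathWeight w hl₂]
  · exact walkWeight_le_maxPathWeight w (List.nodup_cons.2 ⟨hi, hl⟩)

end MaxPathWeight

theorem exists_envyFree_payments_iff {ι : Type*} [Fintype ι] (u : ι → ι → ℝ) :
    (∃ p : ι → ℝ, (∀ i, 0 ≤ p i) ∧ ∀ i j, u i j + p j ≤ u i i + p i) ↔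
      ∀ σ : Equiv.Perm ι, ∑ i, u i (σ i) ≤ ∑ i, u i i := by
  constructor
  · rintro ⟨p, -, hp⟩ σ
    have hsum := sum_le_sum fun i (_ : i ∈ univ) => hp i (σ i)
    rw [sum_add_distrib, sum_add_distrib, Equiv.sum_comp σ p] at hsum
    linarith
  · intro hσ
    set w : ι → ι → ℝ := fun i j => u i j - u i i
    have hcyc : ∀ i l, (i :: l).Nodup → walkWeight w i (l ++ [i]) ≤ 0 := fun i l hl =>
      walkWeight_append_nonpos_of_sum_perm_nonpos w (fun i => sub_self _)
        (fun σ => by simpa [w, sum_sub_distrib] using hσ σ) hl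
    exact ⟨maxPathWeight w, maxPathWeight_nonneg w,
      fun i j => by linarith [add_maxPathWeight_le w hcyc i j]⟩

theorem envy_freeable_iff_welfare_maximizing_general
    {α : Type*} {n : ℕ}
    (v : Fin n → Finset α → ℝ) (A : Fin n → Finset α) :
    (∃ p : Fin n → ℝ, (∀ i, 0 ≤ p i) ∧
        ∀ i j : Fin n, v i (A j) + p j ≤ v i (A i) + p i) ↔
      (∀ σ : Equiv.Perm (Fin n), ∑ i, v i (A (σ i)) ≤ ∑ i, v i (A i)) :=
  exists_envyFree_payments_iff fun i j => v i (A j)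

/-- **Characterization of envy-freeable allocations (Halpern–Shah).**
An allocation `A = (A 1, …, A n)` of the items among `n` agents is envy-freeable
(there is a nonnegative payment vector `p` with `v i (A i) + p i ≥ v i (A j) + p j`
for all `i, j`) if and only if `A` maximizes total welfare over all reassignments
of its bundles: `∑ i, v i (A i) ≥ ∑ i, v i (A (σ i))` for every permutation `σ`. -/
theorem envy_freeable_iff_welfare_maximizing
    {α : Type*} [Fintype α] [DecidableEq α] {n : ℕ}
    (v : Fin n → Finset α → ℝ) (A : Fin n → Finset α)
    (hdisj : ∀ i j : Fin n, i ≠ j → Disjoint (A i) (A j))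
    (hcover : ∀ x : α, ∃ i : Fin n, x ∈ A i) :
    (∃ p : Fin n → ℝ, (∀ i, 0 ≤ p i) ∧
        ∀ i j : Fin n, v i (A j) + p j ≤ v i (A i) + p i) ↔
      (∀ σ : Equiv.Perm (Fin n), ∑ i, v i (A (σ i)) ≤ ∑ i, v i (A i)) :=
  envy_freeable_iff_welfare_maximizing_general v A
end

section
/- Let A = (A_1, …, A_n) be an allocation of a finite set M among n agents with valuations v_1, …, v_n : 2^M → ℝ. Then A maximizes total welfare over all permutations of its bundles (i.e., ∑_i v_i(A_i) ≥ ∑_i v_i(A_{σ(i)}) for every permutation σ of [n]) if and only if the envy graph G_A contains no cycle of positive total weight. -/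
/-!
Writing `w i j = v i (A j) - v i (A i)`, the welfare gain of reassigning bundles by `σ` is
`∑ i, w i (σ i)`. Since `w i i = 0`, this gain is additive over the disjoint cycle
decomposition of `σ`, and on a single cycle it is exactly the weight of that cycle in the envy
graph.
-/

/-- The total weight of the closed walk (cycle) visiting the vertices of `l` in
order and returning to the start: the sum of `w` over consecutive pairs of `l`,
including the closing arc from the last vertex back to the first. -/
def cycleWeight {n : ℕ} (w : Fin n → Fin n → ℝ) (l : List (Fin n)) : ℝ :=
  ((l.zip (l.rotate 1)).map fun q => w q.1 q.2).sum

open Equiv Finset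

section PermWeight

variable {ι M : Type*} [Fintype ι] [AddCommMonoid M]

def permWeight (w : ι → ι → M) (σ : Perm ι) : M :=
  ∑ i, w i (σ i)

variable {w : ι → ι → M}

theorem permWeight_one (hw : ∀ i, w i i = 0) : permWeight w 1 = 0 := by
  simp [permWeight, hw]

theorem permWeight_mul_of_disjoint (hw : ∀ i, w i i = 0) {σ τ : Perm ι}
    (hστ : σ.Disjoint τ) : permWeight w (σ * τ) = permWeight w σ + permWeight w τ := by
  rw [permWeight, permWeight, permWeight, ← sum_add_distrib]
  refine sum_congr rfl fun i _ => ?_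
  rcases hστ i with hσi | hτi
  · have hστi : σ (τ i) = τ i := by
      rcases hστ (τ i) with h | h
      · exact h
      · rw [τ.injective h, hσi]
    simp [hστi, hσi, hw]
  · simp [hτi, hw]

theorem permWeight_nonpos_of_forall_isCycle [DecidableEq ι] [PartialOrder M]
    [IsOrderedAddMonoid M] (hw : ∀ i, w i i = 0)
    (hcycle : ∀ c : Perm ι, c.IsCycle → permWeight w c ≤ 0) (σ : Perm ι) :
    permWeight w σ ≤ 0 := by
  induction σ using Perm.cycle_induction_on with
  | base_one => exact (permWeight_one hw).le
  | base_cycles c hc => exact hcycle c hc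
  | induction_disjoint σ τ hστ _ hσ hτ =>
    rw [permWeight_mul_of_disjoint hw hστ]
    exact add_nonpos hσ hτ

end PermWeight

theorem Equiv.Perm.IsCycle.exists_formPerm_eq {ι : Type*} [Fintype ι] [DecidableEq ι]
    {σ : Perm ι} (hσ : σ.IsCycle) : ∃ l : List ι, l ≠ [] ∧ l.Nodup ∧ l.formPerm = σ := by
  obtain ⟨x, hx, -⟩ := id hσ
  refine ⟨σ.toList x, ?_, σ.nodup_toList x, ?_⟩
  · simpa using hx
  · rw [Perm.formPerm_toList, hσ.cycleOf_eq hx]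

theorem cycleWeight_eq_permWeight_formPerm {n : ℕ} {w : Fin n → Fin n → ℝ}
    (hw : ∀ i, w i i = 0) {l : List (Fin n)} (hl : l.Nodup) :
    cycleWeight w l = permWeight w l.formPerm := by
  have hrot : l.rotate 1 = l.map l.formPerm := by
    refine List.ext_getElem (by simp) fun i _ _ => ?_
    rw [List.getElem_rotate, List.getElem_map, List.formPerm_apply_getElem _ hl]
  have hzip : l.zip (l.map l.formPerm) = l.map fun x => (x, l.formPerm x) := by
    simpa using List.zip_map' (f := id) (g := l.formPerm) (l := l)
  rw [cycleWeight, hrot, hzip, List.map_map, permWeight]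
  change (l.map fun x => w x (l.formPerm x)).sum = _
  rw [← List.sum_toFinset _ hl]
  -- vertices off the cycle are fixed by `l.formPerm` and contribute `w x x = 0`
  refine sum_subset (subset_univ _) fun x _ hx => ?_
  rw [List.formPerm_apply_of_notMem (by simpa using hx), hw]

theorem forall_permWeight_nonpos_iff_forall_cycleWeight_nonpos {n : ℕ}
    {w : Fin n → Fin n → ℝ} (hw : ∀ i, w i i = 0) :
    (∀ σ : Perm (Fin n), permWeight w σ ≤ 0) ↔
      ∀ l : List (Fin n), l ≠ [] → l.Nodup → cycleWeight w l ≤ 0 := by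
  refine ⟨fun h l _ hl => ?_, fun h => permWeight_nonpos_of_forall_isCycle hw fun c hc => ?_⟩
  · rw [cycleWeight_eq_permWeight_formPerm hw hl]
    exact h _
  · obtain ⟨l, hne, hl, rfl⟩ := hc.exists_formPerm_eq
    rw [← cycleWeight_eq_permWeight_formPerm hw hl]
    exact h l hne hl

theorem welfare_maximizing_iff_no_positive_cycle_general
    {α : Type*} {n : ℕ}
    (v : Fin n → Finset α → ℝ) (A : Fin n → Finset α) :
    (∀ σ : Equiv.Perm (Fin n), ∑ i, v i (A (σ i)) ≤ ∑ i, v i (A i)) ↔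
      (∀ l : List (Fin n), l ≠ [] → l.Nodup →
        cycleWeight (fun i j => v i (A j) - v i (A i)) l ≤ 0) := by
  rw [← forall_permWeight_nonpos_iff_forall_cycleWeight_nonpos fun i => sub_self _]
  simp only [permWeight, sum_sub_distrib, sub_nonpos]

/-- **Welfare maximization iff no positive-weight cycle in the envy graph.**
An allocation `A` maximizes total welfare over all permutations of its bundles
iff the envy graph, with arc weights `w i j = v i (A j) - v i (A i)`,
contains no (simple) cycle of positive total weight. -/
theorem welfare_maximizing_iff_no_positive_cycle
    {α : Type*} [Fintype α] [DecidableEq α] {n : ℕ}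
    (v : Fin n → Finset α → ℝ) (A : Fin n → Finset α)
    (hdisj : ∀ i j : Fin n, i ≠ j → Disjoint (A i) (A j))
    (hcover : ∀ x : α, ∃ i : Fin n, x ∈ A i) :
    (∀ σ : Equiv.Perm (Fin n), ∑ i, v i (A (σ i)) ≤ ∑ i, v i (A i)) ↔
      (∀ l : List (Fin n), l ≠ [] → l.Nodup →
        cycleWeight (fun i j => v i (A j) - v i (A i)) l ≤ 0) :=
  welfare_maximizing_iff_no_positive_cycle_general v A
end

section
/- Let A = (A_1, …, A_n) be an allocation whose envy graph G_A contains no positive-weight cycle. For each agent i, let p_i be the maximum weight of a (simple) path starting at vertex i in G_A (taking the empty path, of weight 0, as allowed). Then p_i ≥ 0 for all i and the pair (A, p) is envy-free: v_i(A_i) + p_i ≥ v_i(A_j) + p_j for all i, j ∈ [n]. -/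
/-- The total weight of the path visiting the vertices of `l` in order
(the empty or one-vertex path has weight `0`). -/
def pathWeight {n : ℕ} (w : Fin n → Fin n → ℝ) (l : List (Fin n)) : ℝ :=
  ((l.zip l.tail).map fun q => w q.1 q.2).sum

section PathWeight

variable {n : ℕ} (w : Fin n → Fin n → ℝ)

@[simp]
lemma pathWeight_singleton (a : Fin n) : pathWeight w [a] = 0 := by
  simp [pathWeight]

@[simp]
lemma pathWeight_cons_cons (a b : Fin n) (l : List (Fin n)) :
    pathWeight w (a :: b :: l) = w a b + pathWeight w (b :: l) := by
  simp [pathWeight]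

lemma pathWeight_append_cons (l₁ : List (Fin n)) (a : Fin n) (l₂ : List (Fin n)) :
    pathWeight w (l₁ ++ a :: l₂) = pathWeight w (l₁ ++ [a]) + pathWeight w (a :: l₂) := by
  induction l₁ with
  | nil => simp
  | cons b l₁ ih =>
    cases l₁ with
    | nil => simp
    | cons c l₁ =>
      simp only [List.cons_append, pathWeight_cons_cons] at ih ⊢
      rw [ih, add_assoc]

lemma cycleWeight_cons (a : Fin n) (l : List (Fin n)) :
    cycleWeight w (a :: l) = pathWeight w (a :: (l ++ [a])) := by
  have hzip : (a :: l).zip (l ++ [a]) = (a :: (l ++ [a])).zip (l ++ [a]) := by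
    have hlen : (a :: l).length = (l ++ [a]).length := by simp
    simpa using (List.zip_append (r₁ := [a]) (r₂ := []) hlen).symm
  simp [cycleWeight, pathWeight, hzip]

lemma cycleWeight_cons_eq_add_pathWeight {a b : Fin n} {l : List (Fin n)}
    (hb : (l ++ [a]).head? = some b) :
    cycleWeight w (a :: l) = w a b + pathWeight w (l ++ [a]) := by
  obtain ⟨t, ht⟩ : ∃ t, l ++ [a] = b :: t := List.head?_eq_some_iff.mp hb
  rw [cycleWeight_cons, ht, pathWeight_cons_cons]

end PathWeight

def simplePathWeights {n : ℕ} (w : Fin n → Fin n → ℝ) (i : Fin n) : Set ℝ :=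
  {x | ∃ l : List (Fin n), l.Nodup ∧ l.head? = some i ∧ pathWeight w l = x}

section MaxPath

variable {n : ℕ} {w : Fin n → Fin n → ℝ} {p : Fin n → ℝ}

lemma nonneg_of_isGreatest_simplePathWeights {i : Fin n}
    (hp : IsGreatest (simplePathWeights w i) (p i)) : 0 ≤ p i :=
  hp.2 ⟨[i], List.nodup_singleton i, rfl, pathWeight_singleton w i⟩

lemma add_le_of_isGreatest_simplePathWeights
    (hcycle : ∀ l : List (Fin n), l ≠ [] → l.Nodup → cycleWeight w l ≤ 0)
    (hp : ∀ i, IsGreatest (simplePathWeights w i) (p i)) (i j : Fin n) :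
    w i j + p j ≤ p i := by
  obtain ⟨l, hnodup, hhead, hweight⟩ := (hp j).1
  obtain ⟨t, rfl⟩ : ∃ t, l = j :: t := List.head?_eq_some_iff.mp hhead
  by_cases hi : i ∈ j :: t
  · obtain ⟨c, d, hsplit⟩ := List.append_of_mem hi
    rw [hsplit, List.nodup_middle] at hnodup
    have hcycle_nodup : (i :: c).Nodup :=
      hnodup.sublist ((List.sublist_append_left c d).cons_cons i)
    have htail_nodup : (i :: d).Nodup :=
      hnodup.sublist ((List.sublist_append_right c d).cons_cons i)
    have hhead' : (c ++ [i]).head? = some j := by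
      rw [← List.head?_cons (a := j) (l := t), hsplit]
      cases c <;> rfl
    have hcyc := hcycle (i :: c) (List.cons_ne_nil i c) hcycle_nodup
    have htail := (hp i).2 ⟨i :: d, htail_nodup, rfl, rfl⟩
    rw [cycleWeight_cons_eq_add_pathWeight w hhead'] at hcyc
    rw [← hweight, hsplit, pathWeight_append_cons]
    linarith
  · have := (hp i).2 ⟨i :: j :: t, List.nodup_cons.mpr ⟨hi, hnodup⟩, rfl, rfl⟩
    rwa [pathWeight_cons_cons, hweight] at this

end MaxPath

theorem max_path_payments_envy_free_general
    {α : Type*} {n : ℕ}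
    (v : Fin n → Finset α → ℝ) (A : Fin n → Finset α)
    (hnocycle : ∀ l : List (Fin n), l ≠ [] → l.Nodup →
      cycleWeight (fun i j => v i (A j) - v i (A i)) l ≤ 0)
    (p : Fin n → ℝ)
    (hp : ∀ i : Fin n,
      IsGreatest {x : ℝ | ∃ l : List (Fin n), l.Nodup ∧ l.head? = some i ∧
        pathWeight (fun i j => v i (A j) - v i (A i)) l = x} (p i)) :
    (∀ i, 0 ≤ p i) ∧
    (∀ i j : Fin n, v i (A j) + p j ≤ v i (A i) + p i) := by
  refine ⟨fun i => nonneg_of_isGreatest_simplePathWeights (hp i), fun i j => ?_⟩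
  have := add_le_of_isGreatest_simplePathWeights hnocycle hp i j
  linarith

/-- **Maximum-path payments are envy-free (Halpern–Shah).**
Let `A` be an allocation whose envy graph (arc weights
`w i j = v i (A j) - v i (A i)`) has no positive-weight cycle. If for each
agent `i`, `p i` is the maximum weight of a simple path starting at `i`
(the one-vertex path, of weight `0`, being allowed), then `p i ≥ 0` for all `i`
and `(A, p)` is envy-free: `v i (A i) + p i ≥ v i (A j) + p j` for all `i, j`. -/
theorem max_path_payments_envy_free
    {α : Type*} [Fintype α] [DecidableEq α] {n : ℕ}
    (v : Fin n → Finset α → ℝ) (A : Fin n → Finset α)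
    (hdisj : ∀ i j : Fin n, i ≠ j → Disjoint (A i) (A j))
    (hcover : ∀ x : α, ∃ i : Fin n, x ∈ A i)
    (hnocycle : ∀ l : List (Fin n), l ≠ [] → l.Nodup →
      cycleWeight (fun i j => v i (A j) - v i (A i)) l ≤ 0)
    (p : Fin n → ℝ)
    (hp : ∀ i : Fin n,
      IsGreatest {x : ℝ | ∃ l : List (Fin n), l.Nodup ∧ l.head? = some i ∧
        pathWeight (fun i j => v i (A j) - v i (A i)) l = x} (p i)) :
    (∀ i, 0 ≤ p i) ∧
    (∀ i j : Fin n, v i (A j) + p j ≤ v i (A i) + p i) :=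
  max_path_payments_envy_free_general v A hnocycle p hp
end

section
/- Let A = (A_1, …, A_n) be an allocation whose envy graph G_A contains no positive-weight cycle. Then for every agent i, the maximum weight p_i of a simple path starting at vertex i in G_A satisfies p_i ≤ max_{j ∈ [n]} ( v_j(A_j) − v_j(A_i) ). Moreover, min_{i ∈ [n]} p_i = 0. -/
def pw {n : ℕ} (w : Fin n → Fin n → ℝ) : List (Fin n) → ℝ
  | [] => 0
  | [_] => 0
  | a :: b :: t => w a b + pw w (b :: t)

lemma pathWeight_eq_pw {n : ℕ} (w : Fin n → Fin n → ℝ) :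
    ∀ l, pathWeight w l = pw w l := by
  intro l
  induction l with
  | nil => simp [pathWeight, pw]
  | cons a t ih =>
    cases t with
    | nil => simp [pathWeight, pw]
    | cons b t' =>
      simp only [pathWeight, pw, List.tail_cons, List.zip_cons_cons, List.map_cons,
        List.sum_cons] at *
      rw [← ih]

lemma zip_trunc {β γ : Type*} :
    ∀ (l₁ : List β) (l₂ : List γ) (ext : List β), l₂.length ≤ l₁.length →
      (l₁ ++ ext).zip l₂ = l₁.zip l₂ := by
  intro l₁
  induction l₁ with
  | nil => intro l₂ ext h; simp at h; simp [h]
  | cons a t ih =>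
    intro l₂ ext h
    cases l₂ with
    | nil => simp
    | cons b t₂ =>
      simp only [List.cons_append, List.zip_cons_cons]
      rw [ih t₂ ext (by simpa using h)]

lemma cycleWeight_eq_pw {n : ℕ} (w : Fin n → Fin n → ℝ) (a : Fin n) (t : List (Fin n)) :
    cycleWeight w (a :: t) = pw w ((a :: t) ++ [a]) := by
  rw [← pathWeight_eq_pw]
  unfold cycleWeight pathWeight
  have h1 : (a :: t).rotate 1 = t ++ [a] := by
    rw [List.rotate_cons_succ, List.rotate_zero]
  have h2 : ((a :: t) ++ [a]).tail = t ++ [a] := by simp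
  rw [h1, h2, zip_trunc (a :: t) (t ++ [a]) [a] (by simp)]

lemma pw_append_cons {n : ℕ} (w : Fin n → Fin n → ℝ) :
    ∀ (l₁ : List (Fin n)) (a : Fin n) (l₂ : List (Fin n)),
      pw w (l₁ ++ a :: l₂) = pw w (l₁ ++ [a]) + pw w (a :: l₂) := by
  intro l₁
  induction l₁ with
  | nil => intro a l₂; simp [pw]
  | cons x xs ih =>
    intro a l₂
    cases xs with
    | nil => simp [pw]
    | cons y ys =>
      have := ih a l₂
      simp only [List.cons_append, pw, List.append_eq] at *
      rw [this]; ring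

lemma pw_append_last {n : ℕ} (w : Fin n → Fin n → ℝ) :
    ∀ (l : List (Fin n)) (hl : l ≠ []) (a : Fin n),
      pw w (l ++ [a]) = pw w l + w (l.getLast hl) a := by
  intro l
  induction l with
  | nil => intro hl; exact absurd rfl hl
  | cons x xs ih =>
    intro hl a
    cases xs with
    | nil => simp [pw]
    | cons y ys =>
      have := ih (by simp) a
      have hg : (x :: y :: ys).getLast hl = (y :: ys).getLast (by simp) :=
        List.getLast_cons (by simp)
      simp only [List.cons_append, pw, List.append_eq] at *
      rw [this, hg]; ring

lemma exists_dup {β : Type*} (l : List β) (h : ¬ l.Nodup) :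
    ∃ (x : β) (l₁ l₂ l₃ : List β), l = l₁ ++ x :: l₂ ++ x :: l₃ := by
  induction l with
  | nil => simp at h
  | cons a t ih =>
    rw [List.nodup_cons] at h
    push_neg at h
    by_cases ha : a ∈ t
    · obtain ⟨s, u, rfl⟩ := List.append_of_mem ha
      exact ⟨a, [], s, u, by simp⟩
    · obtain ⟨x, l₁, l₂, l₃, rfl⟩ := ih (h ha)
      exact ⟨x, a :: l₁, l₂, l₃, by simp⟩

lemma head?_append_cons {β : Type*} (l₁ : List β) (x : β) (r₁ r₂ : List β) :
    (l₁ ++ x :: r₁).head? = (l₁ ++ x :: r₂).head? := by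
  cases l₁ <;> simp


lemma closed_nonpos {n : ℕ} (w : Fin n → Fin n → ℝ)
    (hno : ∀ l : List (Fin n), l ≠ [] → l.Nodup → cycleWeight w l ≤ 0) :
    ∀ (k : ℕ) (l : List (Fin n)) (a : Fin n), l.head? = some a → l.length ≤ k →
      pw w (l ++ [a]) ≤ 0 := by
  intro k
  induction k with
  | zero =>
    intro l a hh hl
    cases l with
    | nil => simp at hh
    | cons b t => simp at hl
  | succ k ih =>
    intro l a hh hl
    by_cases hnd : l.Nodup
    · cases l with
      | nil => simp at hh
      | cons b t =>
        simp only [List.head?_cons, Option.some_inj] at hh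
        subst hh
        have := hno (b :: t) (by simp) hnd
        rwa [cycleWeight_eq_pw] at this
    · obtain ⟨x, l₁, l₂, l₃, rfl⟩ := exists_dup _ hnd
      have e1 : pw w ((l₁ ++ x :: l₂ ++ x :: l₃) ++ [a])
          = pw w (l₁ ++ [x]) + pw w (x :: (l₂ ++ x :: (l₃ ++ [a]))) := by
        have e0 : (l₁ ++ x :: l₂ ++ x :: l₃) ++ [a]
            = l₁ ++ x :: (l₂ ++ x :: (l₃ ++ [a])) := by simp
        rw [e0, pw_append_cons]
      have e2 : pw w (x :: (l₂ ++ x :: (l₃ ++ [a])))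
          = pw w ((x :: l₂) ++ [x]) + pw w (x :: (l₃ ++ [a])) := by
        have e0 : x :: (l₂ ++ x :: (l₃ ++ [a])) = (x :: l₂) ++ x :: (l₃ ++ [a]) := by simp
        rw [e0, pw_append_cons]
      have e3 : pw w ((l₁ ++ x :: l₃) ++ [a])
          = pw w (l₁ ++ [x]) + pw w (x :: (l₃ ++ [a])) := by
        have e0 : (l₁ ++ x :: l₃) ++ [a] = l₁ ++ x :: (l₃ ++ [a]) := by simp
        rw [e0, pw_append_cons]
      simp only [List.length_append, List.length_cons] at hl
      have ih1 : pw w ((x :: l₂) ++ [x]) ≤ 0 :=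
        ih (x :: l₂) x (by simp) (by simp; omega)
      have ih2 : pw w ((l₁ ++ x :: l₃) ++ [a]) ≤ 0 := by
        refine ih (l₁ ++ x :: l₃) a ?_ (by simp; omega)
        rw [head?_append_cons l₁ x l₃ (l₂ ++ x :: l₃)]
        simpa using hh
      linarith

lemma walk_le {n : ℕ} (w : Fin n → Fin n → ℝ) (p : Fin n → ℝ)
    (hno : ∀ l : List (Fin n), l ≠ [] → l.Nodup → cycleWeight w l ≤ 0)
    (hp : ∀ i : Fin n,
      IsGreatest {x : ℝ | ∃ l : List (Fin n), l.Nodup ∧ l.head? = some i ∧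
        pathWeight w l = x} (p i)) :
    ∀ (k : ℕ) (l : List (Fin n)) (i : Fin n), l.head? = some i → l.length ≤ k →
      pw w l ≤ p i := by
  intro k
  induction k with
  | zero =>
    intro l i hh hl
    cases l with
    | nil => simp at hh
    | cons b t => simp at hl
  | succ k ih =>
    intro l i hh hl
    by_cases hnd : l.Nodup
    · exact (hp i).2 ⟨l, hnd, hh, pathWeight_eq_pw w l⟩
    · obtain ⟨x, l₁, l₂, l₃, rfl⟩ := exists_dup _ hnd
      have e1 : pw w (l₁ ++ x :: l₂ ++ x :: l₃)
          = pw w (l₁ ++ [x]) + pw w (x :: (l₂ ++ x :: l₃)) := by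
        have e0 : l₁ ++ x :: l₂ ++ x :: l₃ = l₁ ++ x :: (l₂ ++ x :: l₃) := by simp
        rw [e0, pw_append_cons]
      have e2 : pw w (x :: (l₂ ++ x :: l₃))
          = pw w ((x :: l₂) ++ [x]) + pw w (x :: l₃) := by
        have e0 : x :: (l₂ ++ x :: l₃) = (x :: l₂) ++ x :: l₃ := by simp
        rw [e0, pw_append_cons]
      have e3 : pw w (l₁ ++ x :: l₃)
          = pw w (l₁ ++ [x]) + pw w (x :: l₃) := pw_append_cons w l₁ x l₃
      simp only [List.length_append, List.length_cons] at hl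
      have hcyc : pw w ((x :: l₂) ++ [x]) ≤ 0 :=
        closed_nonpos w hno (l₂.length + 1) (x :: l₂) x (by simp) (by simp)
      have ih1 : pw w (l₁ ++ x :: l₃) ≤ p i := by
        refine ih (l₁ ++ x :: l₃) i ?_ (by simp; omega)
        rw [head?_append_cons l₁ x l₃ (l₂ ++ x :: l₃)]
        simpa using hh
      linarith

/-- **Bounding the maximum-path payments.**
Let `A` be an allocation whose envy graph (arc weights
`w i j = v i (A j) - v i (A i)`) has no positive-weight cycle, and for each agent
`i` let `p i` be the maximum weight of a simple path starting at `i`.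
Then `p i ≤ max_{j} (v j (A j) - v j (A i))` for every `i`, and `min_i p i = 0`. -/
theorem max_path_payments_bounded
    {α : Type*} [Fintype α] [DecidableEq α] {n : ℕ} (hn : 0 < n)
    (v : Fin n → Finset α → ℝ) (A : Fin n → Finset α)
    (hdisj : ∀ i j : Fin n, i ≠ j → Disjoint (A i) (A j))
    (hcover : ∀ x : α, ∃ i : Fin n, x ∈ A i)
    (hnocycle : ∀ l : List (Fin n), l ≠ [] → l.Nodup →
      cycleWeight (fun i j => v i (A j) - v i (A i)) l ≤ 0)
    (p : Fin n → ℝ)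
    (hp : ∀ i : Fin n,
      IsGreatest {x : ℝ | ∃ l : List (Fin n), l.Nodup ∧ l.head? = some i ∧
        pathWeight (fun i j => v i (A j) - v i (A i)) l = x} (p i)) :
    (∀ i : Fin n, ∃ j : Fin n, p i ≤ v j (A j) - v j (A i)) ∧
    IsLeast (Set.range p) 0 := by
  set w : Fin n → Fin n → ℝ := fun i j => v i (A j) - v i (A i) with hw
  have hp0 : ∀ i : Fin n, 0 ≤ p i := by
    intro i
    exact (hp i).2 ⟨[i], by simp, by simp, by simp [pathWeight]⟩
  constructor
  · intro i
    obtain ⟨l, hnd, hh, hpe⟩ := (hp i).1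
    cases l with
    | nil => simp at hh
    | cons b t =>
      simp only [List.head?_cons, Option.some_inj] at hh
      subst hh
      rw [pathWeight_eq_pw] at hpe
      obtain ⟨j, hj⟩ : ∃ j, (b :: t).getLast (by simp) = j := ⟨_, rfl⟩
      refine ⟨j, ?_⟩
      have h1 := hnocycle (b :: t) (by simp) hnd
      rw [cycleWeight_eq_pw, pw_append_last w (b :: t) (by simp) b, hj] at h1
      have hwji : w j b = v j (A b) - v j (A j) := rfl
      rw [hwji] at h1
      linarith
  · constructor
    · -- 0 ∈ Set.range p : find t with p t = 0
      have i₀ : Fin n := ⟨0, hn⟩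
      obtain ⟨l₀, hnd₀, hh₀, hpe₀⟩ := (hp i₀).1
      cases l₀ with
      | nil => simp at hh₀
      | cons b t₀ =>
        simp only [List.head?_cons, Option.some_inj] at hh₀
        subst hh₀
        rw [pathWeight_eq_pw] at hpe₀
        obtain ⟨j, hj⟩ : ∃ j, (b :: t₀).getLast (by simp) = j := ⟨_, rfl⟩
        obtain ⟨q, hndq, hhq, hpeq⟩ := (hp j).1
        cases q with
        | nil => simp at hhq
        | cons c qt =>
          simp only [List.head?_cons, Option.some_inj] at hhq
          subst hhq
          rw [pathWeight_eq_pw] at hpeq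
          have key : pw w ((b :: t₀) ++ qt) = pw w (b :: t₀) + pw w (c :: qt) := by
            cases qt with
            | nil => simp [pw]
            | cons d rest =>
              rw [pw_append_cons w (b :: t₀) d rest,
                pw_append_last w (b :: t₀) (by simp) d, hj]
              show _ = _ + (w c d + pw w (d :: rest))
              ring
          have hwle : pw w ((b :: t₀) ++ qt) ≤ p b :=
            walk_le w p hnocycle hp ((b :: t₀) ++ qt).length _ b (by simp) le_rfl
          rw [key, hpe₀, hpeq] at hwle
          exact ⟨c, le_antisymm (by linarith) (hp0 c)⟩
    · rintro x ⟨i, rfl⟩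
      exact hp0 i
end

section
/- Let M be a finite set and let V = {v_1, …, v_n} be valuations v_i : 2^M → ℝ. There exists an allocation A = (A_1, …, A_n) of M and a payment vector p = (p_1, …, p_n) with p ≥ 0 such that the pair (A, p) is envy-free, p_i ≤ disc(V, n) for every agent i, at least one p_i equals 0, and the total payment satisfies ∑_{i=1}^n p_i ≤ (n − 1)·disc(V, n). -/
/-- The discrepancy of the family `v` with respect to the `k`-coloring `χ`:
`max_{ℓ,ℓ'} max_i |v i (χ⁻¹ ℓ) - v i (χ⁻¹ ℓ')|`. -/
noncomputable def discWrt {α : Type*} [Fintype α] [DecidableEq α] {n k : ℕ}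
    (v : Fin n → Finset α → ℝ) (χ : α → Fin k) : ℝ :=
  ⨆ ℓ : Fin k, ⨆ ℓ' : Fin k, ⨆ i : Fin n,
    |v i (Finset.univ.filter fun j => χ j = ℓ) -
      v i (Finset.univ.filter fun j => χ j = ℓ')|

/-- The `k`-color discrepancy of the family `v`: `min_χ disc(V, k, χ)`. -/
noncomputable def disc {α : Type*} [Fintype α] [DecidableEq α] {n : ℕ}
    (v : Fin n → Finset α → ℝ) (k : ℕ) : ℝ :=
  ⨅ χ : α → Fin k, discWrt v χ

namespace EnvyWalk

variable {n : ℕ}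

/-- The sum of edge weights along the first `L` steps of the walk `w`. -/
noncomputable def walkSum (c : Fin n → Fin n → ℝ) (w : ℕ → Fin n) (L : ℕ) : ℝ :=
  ∑ t ∈ Finset.range L, c (w t) (w (t + 1))

lemma walkSum_splice (c : Fin n → Fin n → ℝ) (w : ℕ → Fin n) (s t L : ℕ)
    (hst : s ≤ t) (htL : t ≤ L) (hw : w s = w t) :
    walkSum c w L =
      walkSum c (fun u => if u ≤ s then w u else w (u + (t - s))) (L - (t - s)) +
        walkSum c (fun u => w (s + u)) (t - s) := by
  classical
  have hsL' : s ≤ L - (t - s) := by omega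
  have e1 : walkSum c w L =
      (∑ u ∈ Finset.Ico 0 s, c (w u) (w (u + 1))) +
        ((∑ u ∈ Finset.Ico s t, c (w u) (w (u + 1))) +
          (∑ u ∈ Finset.Ico t L, c (w u) (w (u + 1)))) := by
    rw [Finset.sum_Ico_consecutive _ hst htL,
      Finset.sum_Ico_consecutive _ (Nat.zero_le s) (hst.trans htL)]
    simp only [walkSum, Finset.range_eq_Ico]
  have e3 : walkSum c (fun u => w (s + u)) (t - s) =
      ∑ u ∈ Finset.Ico s t, c (w u) (w (u + 1)) := by
    rw [Finset.sum_Ico_eq_sum_range]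
    simp only [walkSum]
    refine Finset.sum_congr rfl fun r _ => ?_
    have h : s + (r + 1) = s + r + 1 := by omega
    rw [h]
  have e2 : walkSum c (fun u => if u ≤ s then w u else w (u + (t - s))) (L - (t - s)) =
      (∑ u ∈ Finset.Ico 0 s, c (w u) (w (u + 1))) +
        ∑ u ∈ Finset.Ico t L, c (w u) (w (u + 1)) := by
    simp only [walkSum]
    rw [Finset.range_eq_Ico, ← Finset.sum_Ico_consecutive _ (Nat.zero_le s) hsL']
    congr 1
    · refine Finset.sum_congr rfl fun u hu => ?_
      have hu' : u < s := (Finset.mem_Ico.mp hu).2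
      rw [if_pos hu'.le, if_pos (by omega : u + 1 ≤ s)]
    · rw [Finset.sum_Ico_eq_sum_range, Finset.sum_Ico_eq_sum_range]
      have hcard : L - (t - s) - s = L - t := by omega
      rw [hcard]
      refine Finset.sum_congr rfl fun r _ => ?_
      rw [if_neg (by omega : ¬ (s + r + 1 ≤ s))]
      by_cases h0 : r = 0
      · subst h0
        rw [if_pos (by omega : s + 0 ≤ s)]
        have h2 : s + 0 + 1 + (t - s) = t + 0 + 1 := by omega
        have h3 : s + 0 = s := by omega
        rw [h2, h3, hw]
        norm_num
      · rw [if_neg (by omega : ¬ (s + r ≤ s))]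
        have h2 : s + r + (t - s) = t + r := by omega
        have h3 : s + r + 1 + (t - s) = t + r + 1 := by omega
        rw [h2, h3]
  rw [e1, e2, e3]; ring

lemma closed_walk_nonpos (c : Fin n → Fin n → ℝ)
    (hA : ∀ (w : ℕ → Fin n) (L : ℕ), 0 < L → w 0 = w L →
      (∀ s t, s < L → t < L → w s = w t → s = t) → walkSum c w L ≤ 0) :
    ∀ (L : ℕ) (w : ℕ → Fin n), w 0 = w L → walkSum c w L ≤ 0 := by
  intro L
  induction L using Nat.strong_induction_on with
  | _ L IH =>
    intro w hw
    rcases Nat.eq_zero_or_pos L with rfl | hL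
    · simp [walkSum]
    by_cases hinj : ∀ s t, s < L → t < L → w s = w t → s = t
    · exact hA w L hL hw hinj
    · push_neg at hinj
      obtain ⟨s, t, hs, ht, hws, hne⟩ := hinj
      have core : ∀ s t : ℕ, s < t → t < L → w s = w t → walkSum c w L ≤ 0 := by
        intro s t hlt ht hws
        have hsplice := walkSum_splice c w s t L hlt.le ht.le hws
        have hmid : walkSum c (fun u => w (s + u)) (t - s) ≤ 0 := by
          refine IH (t - s) (by omega) _ ?_
          show w (s + 0) = w (s + (t - s))
          rw [(by omega : s + 0 = s), (by omega : s + (t - s) = t)]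
          exact hws
        have houter :
            walkSum c (fun u => if u ≤ s then w u else w (u + (t - s))) (L - (t - s)) ≤ 0 := by
          refine IH (L - (t - s)) (by omega) _ ?_
          show (if 0 ≤ s then w 0 else w (0 + (t - s))) =
            (if L - (t - s) ≤ s then w (L - (t - s)) else w (L - (t - s) + (t - s)))
          rw [if_pos (Nat.zero_le s), if_neg (by omega : ¬ (L - (t - s) ≤ s)),
            (by omega : L - (t - s) + (t - s) = L)]
          exact hw
        linarith
      rcases hne.lt_or_gt with h | h
      · exact core s t h ht hws
      · exact core t s h hs hws.symm

lemma walk_shorten (c : Fin n → Fin n → ℝ) (hn : 0 < n) (hself : ∀ i, c i i = 0)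
    (hB : ∀ (L : ℕ) (w : ℕ → Fin n), w 0 = w L → walkSum c w L ≤ 0) :
    ∀ (L : ℕ) (w : ℕ → Fin n), ∃ u : ℕ → Fin n, u 0 = w 0 ∧
      walkSum c w L ≤ walkSum c u (n - 1) := by
  intro L
  induction L using Nat.strong_induction_on with
  | _ L IH =>
    intro w
    by_cases hL : L ≤ n - 1
    · refine ⟨fun t => w (min t L), by simp, le_of_eq ?_⟩
      simp only [walkSum]
      conv_rhs => rw [Finset.range_eq_Ico, ← Finset.sum_Ico_consecutive _ (Nat.zero_le L) hL,
        ← Finset.range_eq_Ico]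
      have h2 : ∑ u ∈ Finset.Ico L (n - 1),
          c (w (min u L)) (w (min (u + 1) L)) = 0 := by
        refine Finset.sum_eq_zero fun u hu => ?_
        have hu' : L ≤ u := (Finset.mem_Ico.mp hu).1
        rw [(by omega : min u L = L), (by omega : min (u + 1) L = L), hself]
      rw [h2, add_zero]
      refine Finset.sum_congr rfl fun u hu => ?_
      have hu' : u < L := Finset.mem_range.mp hu
      rw [(by omega : min u L = u), (by omega : min (u + 1) L = u + 1)]
    · -- L ≥ n : pigeonhole among w 0, …, w n
      have hLn : n ≤ L := by omega
      have hmaps : ∀ x ∈ Finset.range (n + 1), w x ∈ (Finset.univ : Finset (Fin n)) := by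
        intro x _; exact Finset.mem_univ _
      have hcard : (Finset.univ : Finset (Fin n)).card < (Finset.range (n + 1)).card := by
        simp
      obtain ⟨s, hs, t, ht, hne, hws⟩ :=
        Finset.exists_ne_map_eq_of_card_lt_of_maps_to hcard hmaps
      rw [Finset.mem_range] at hs ht
      have core : ∀ s t : ℕ, s < t → t ≤ n → w s = w t →
          ∃ u : ℕ → Fin n, u 0 = w 0 ∧ walkSum c w L ≤ walkSum c u (n - 1) := by
        intro s t hlt htn hws
        have htL : t ≤ L := htn.trans hLn
        have hsplice := walkSum_splice c w s t L hlt.le htL hws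
        have hmid : walkSum c (fun u => w (s + u)) (t - s) ≤ 0 := by
          refine hB (t - s) _ ?_
          show w (s + 0) = w (s + (t - s))
          rw [(by omega : s + 0 = s), (by omega : s + (t - s) = t)]
          exact hws
        obtain ⟨u, hu0, hule⟩ := IH (L - (t - s)) (by omega)
          (fun u => if u ≤ s then w u else w (u + (t - s)))
        refine ⟨u, ?_, ?_⟩
        · rw [hu0]
          show (if 0 ≤ s then w 0 else w (0 + (t - s))) = w 0
          rw [if_pos (Nat.zero_le s)]
        · calc walkSum c w L = _ := hsplice
            _ ≤ walkSum c (fun u => if u ≤ s then w u else w (u + (t - s)))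
                (L - (t - s)) := by linarith
            _ ≤ walkSum c u (n - 1) := hule
      rcases hne.lt_or_gt with h | h
      · exact core s t h (by omega) hws
      · exact core t s h (by omega) hws.symm

lemma exists_potentials (c : Fin n → Fin n → ℝ) (hn : 0 < n) (d : ℝ)
    (hself : ∀ i, c i i = 0)
    (hB : ∀ (L : ℕ) (w : ℕ → Fin n), w 0 = w L → walkSum c w L ≤ 0)
    (hd' : ∀ i j, -d ≤ c i j) :
    ∃ p : Fin n → ℝ, (∀ i, 0 ≤ p i) ∧ (∀ i j, c i j + p j ≤ p i) ∧ (∀ i, p i ≤ d) := by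
  classical
  obtain ⟨m, rfl⟩ : ∃ m, n = m + 1 := ⟨n - 1, by omega⟩
  have hub : ∀ i : Fin (m + 1), ∀ s : ℝ,
      (∃ w : ℕ → Fin (m + 1), w 0 = i ∧ walkSum c w m = s) → s ≤ d := by
    rintro i s ⟨w, hw0, rfl⟩
    have hclosed : walkSum c (fun t => if t < m + 1 then w t else i) (m + 1) ≤ 0 := by
      refine hB (m + 1) _ ?_
      show (if 0 < m + 1 then w 0 else i) = (if m + 1 < m + 1 then w (m + 1) else i)
      rw [if_pos (by omega : 0 < m + 1), if_neg (lt_irrefl (m + 1)), hw0]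
    have hsum : walkSum c (fun t => if t < m + 1 then w t else i) (m + 1)
        = walkSum c w m + c (w m) i := by
      simp only [walkSum]
      rw [Finset.sum_range_succ]
      congr 1
      · refine Finset.sum_congr rfl fun u hu => ?_
        have hu' : u < m := Finset.mem_range.mp hu
        rw [if_pos (by omega : u < m + 1), if_pos (by omega : u + 1 < m + 1)]
      · rw [if_pos (by omega : m < m + 1), if_neg (lt_irrefl (m + 1))]
    have h := hd' (w m) i
    linarith
  have hbdd : ∀ i : Fin (m + 1),
      BddAbove {s : ℝ | ∃ w : ℕ → Fin (m + 1), w 0 = i ∧ walkSum c w m = s} :=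
    fun i => ⟨d, fun s hs => hub i s hs⟩
  have h0 : ∀ i : Fin (m + 1),
      (0 : ℝ) ∈ {s : ℝ | ∃ w : ℕ → Fin (m + 1), w 0 = i ∧ walkSum c w m = s} :=
    fun i => ⟨fun _ => i, rfl, by simp [walkSum, hself]⟩
  have hne : ∀ i : Fin (m + 1),
      {s : ℝ | ∃ w : ℕ → Fin (m + 1), w 0 = i ∧ walkSum c w m = s}.Nonempty :=
    fun i => ⟨0, h0 i⟩
  refine ⟨fun i => sSup {s : ℝ | ∃ w : ℕ → Fin (m + 1), w 0 = i ∧ walkSum c w m = s},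
    ?_, ?_, ?_⟩
  · intro i; exact le_csSup (hbdd i) (h0 i)
  · intro i j
    have key : ∀ s ∈ {s : ℝ | ∃ w : ℕ → Fin (m + 1), w 0 = j ∧ walkSum c w m = s},
        s ≤ sSup {s : ℝ | ∃ w : ℕ → Fin (m + 1), w 0 = i ∧ walkSum c w m = s} - c i j := by
      rintro s ⟨w, hw0, rfl⟩
      have hsum : walkSum c (fun t => if t = 0 then i else w (t - 1)) (m + 1)
          = c i j + walkSum c w m := by
        simp only [walkSum]
        rw [Finset.sum_range_succ']
        have hf0 : c (if 0 = 0 then i else w (0 - 1))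
            (if 0 + 1 = 0 then i else w (0 + 1 - 1)) = c i j := by
          simp [hw0]
        have hfs : ∀ u : ℕ, c (if u + 1 = 0 then i else w (u + 1 - 1))
            (if u + 1 + 1 = 0 then i else w (u + 1 + 1 - 1)) = c (w u) (w (u + 1)) := by
          intro u; simp
        rw [hf0, Finset.sum_congr rfl fun u _ => hfs u]
        ring
      obtain ⟨u, hu0, hule⟩ := walk_shorten c hn hself hB (m + 1)
        (fun t => if t = 0 then i else w (t - 1))
      have hu0' : u 0 = i := by
        rw [hu0]; simp
      have hmem : walkSum c u (m + 1 - 1) ∈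
          {s : ℝ | ∃ w : ℕ → Fin (m + 1), w 0 = i ∧ walkSum c w m = s} :=
        ⟨u, hu0', rfl⟩
      have hle := le_csSup (hbdd i) hmem
      have : walkSum c u (m + 1 - 1) = walkSum c u m := rfl
      rw [this] at hle hule hmem
      linarith
    have := csSup_le (hne j) key
    linarith
  · intro i; exact csSup_le (hne i) (fun s hs => hub i s hs)

end EnvyWalk

/-- **Envy-free allocation with payments bounded by the discrepancy.**
For any valuations `v 1, …, v n` there exist an allocation `A` and a nonnegative
payment vector `p` such that `(A, p)` is envy-free, `p i ≤ disc(V, n)` for every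
agent, at least one payment is zero, and `∑ i, p i ≤ (n - 1) * disc(V, n)`. -/
theorem envy_free_payments_le_discrepancy
    {α : Type*} [Fintype α] [DecidableEq α] {n : ℕ} (hn : 0 < n)
    (v : Fin n → Finset α → ℝ) :
    ∃ (A : Fin n → Finset α) (p : Fin n → ℝ),
      (∀ i j : Fin n, i ≠ j → Disjoint (A i) (A j)) ∧
      (∀ x : α, ∃ i : Fin n, x ∈ A i) ∧
      (∀ i, 0 ≤ p i) ∧
      (∀ i j : Fin n, v i (A j) + p j ≤ v i (A i) + p i) ∧
      (∀ i, p i ≤ disc v n) ∧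
      (∃ i, p i = 0) ∧
      ∑ i, p i ≤ ((n : ℝ) - 1) * disc v n := by
  classical
  have hFin : Nonempty (Fin n) := ⟨⟨0, hn⟩⟩
  have hmaps : Nonempty (α → Fin n) := ⟨fun _ => ⟨0, hn⟩⟩
  -- an optimal coloring
  obtain ⟨χ, hχ⟩ := Finite.exists_min (fun χ : α → Fin n => discWrt v χ)
  have hdχ : discWrt v χ = disc v n := by
    unfold disc
    exact le_antisymm (le_ciInf hχ) (ciInf_le (Set.finite_range _).bddBelow χ)
  set B : Fin n → Finset α := fun ℓ => Finset.univ.filter fun j => χ j = ℓ with hB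
  have hkeyB : ∀ ℓ : Fin n, B ℓ = Finset.univ.filter fun j => χ j = ℓ := fun ℓ => by rw [hB]
  have hdisc_eq : discWrt v χ =
      ⨆ ℓ : Fin n, ⨆ ℓ' : Fin n, ⨆ i : Fin n, |v i (B ℓ) - v i (B ℓ')| := by
    unfold discWrt
    simp only [hkeyB]
  have hbound : ∀ (i : Fin n) (ℓ ℓ' : Fin n), |v i (B ℓ) - v i (B ℓ')| ≤ disc v n := by
    intro i ℓ ℓ'
    rw [← hdχ, hdisc_eq]
    have h1 : |v i (B ℓ) - v i (B ℓ')| ≤ ⨆ i : Fin n, |v i (B ℓ) - v i (B ℓ')| :=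
      le_ciSup (f := fun i : Fin n => |v i (B ℓ) - v i (B ℓ')|)
        (Set.finite_range _).bddAbove i
    have h2 : (⨆ i : Fin n, |v i (B ℓ) - v i (B ℓ')|) ≤
        ⨆ ℓ'' : Fin n, ⨆ i : Fin n, |v i (B ℓ) - v i (B ℓ'')| :=
      le_ciSup (f := fun ℓ'' => ⨆ i : Fin n, |v i (B ℓ) - v i (B ℓ'')|)
        (Set.finite_range _).bddAbove ℓ'
    have h3 : (⨆ ℓ'' : Fin n, ⨆ i : Fin n, |v i (B ℓ) - v i (B ℓ'')|) ≤
        ⨆ ℓ0 : Fin n, ⨆ ℓ'' : Fin n, ⨆ i : Fin n, |v i (B ℓ0) - v i (B ℓ'')| :=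
      le_ciSup (f := fun ℓ0 => ⨆ ℓ'' : Fin n, ⨆ i : Fin n, |v i (B ℓ0) - v i (B ℓ'')|)
        (Set.finite_range _).bddAbove ℓ
    exact h1.trans (h2.trans h3)
  -- a welfare-maximizing assignment of bundles
  obtain ⟨σ, hσ⟩ := Finite.exists_max (fun σ : Equiv.Perm (Fin n) => ∑ i, v i (B (σ i)))
  set A : Fin n → Finset α := fun i => B (σ i) with hA
  set c : Fin n → Fin n → ℝ := fun i j => v i (A j) - v i (A i) with hc
  set d : ℝ := disc v n with hd
  have hcdef : ∀ i j, c i j = v i (B (σ j)) - v i (B (σ i)) := by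
    intro i j
    rw [hc, hA]
  have hself : ∀ i, c i i = 0 := fun i => by rw [hcdef, sub_self]
  have hcd : ∀ i j, c i j ≤ d := by
    intro i j
    rw [hcdef]
    exact (le_abs_self _).trans (hbound i (σ j) (σ i))
  have hcd' : ∀ i j, -d ≤ c i j := by
    intro i j
    rw [hcdef]
    have h := hbound i (σ j) (σ i)
    have h2 := neg_abs_le (v i (B (σ j)) - v i (B (σ i)))
    linarith
  have hd0 : (0 : ℝ) ≤ d := by
    have h := hcd ⟨0, hn⟩ ⟨0, hn⟩
    rwa [hself ⟨0, hn⟩] at h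
  -- simple cycles have nonpositive weight, by optimality of σ
  have hcycle : ∀ (w : ℕ → Fin n) (L : ℕ), 0 < L → w 0 = w L →
      (∀ s t, s < L → t < L → w s = w t → s = t) → EnvyWalk.walkSum c w L ≤ 0 := by
    intro w L hL hwcl hinj
    set l : List (Fin n) := List.ofFn (fun t : Fin L => w t) with hl
    have hlen : l.length = L := by simp [hl]
    have hnodup : l.Nodup := by
      rw [hl, List.nodup_ofFn]
      intro a b hab
      exact Fin.ext (hinj a b a.isLt b.isLt hab)
    set ρ : Equiv.Perm (Fin n) := l.formPerm with hρ
    have hgetElem : ∀ (t : ℕ) (ht : t < L), l[t]'(by omega) = w t := by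
      intro t ht; simp [hl]
    have hkey : ∀ t, t < L → ρ (w t) = w (t + 1) := by
      intro t ht
      have h1 : t < l.length := by omega
      rw [← hgetElem t ht, hρ, List.formPerm_apply_getElem l hnodup t h1]
      rcases Nat.lt_or_ge (t + 1) L with h | h
      · have he : (t + 1) % l.length = t + 1 := by rw [hlen]; exact Nat.mod_eq_of_lt h
        simp only [he]
        exact hgetElem (t + 1) h
      · have ht1 : t + 1 = L := by omega
        have he : (t + 1) % l.length = 0 := by rw [hlen, ht1, Nat.mod_self]
        simp only [he]
        rw [hgetElem 0 hL, hwcl, ht1]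
    have hfix : ∀ x : Fin n, (∀ t, t < L → w t ≠ x) → ρ x = x := by
      intro x hx
      refine List.formPerm_apply_of_notMem ?_
      rw [hl, List.mem_ofFn]
      rintro ⟨t, ht⟩
      exact hx t t.isLt ht
    have hmax := hσ (ρ.trans σ)
    have hsum1 : EnvyWalk.walkSum c w L =
        ∑ x ∈ (Finset.range L).image w, (v x (B (σ (ρ x))) - v x (B (σ x))) := by
      rw [Finset.sum_image (by
        intro a ha b hb hab
        exact hinj a b (Finset.mem_range.mp ha) (Finset.mem_range.mp hb) hab)]
      simp only [EnvyWalk.walkSum]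
      refine Finset.sum_congr rfl fun t ht => ?_
      rw [hkey t (Finset.mem_range.mp ht), hcdef]
    have hsum2 : ∑ x ∈ (Finset.range L).image w, (v x (B (σ (ρ x))) - v x (B (σ x))) =
        ∑ x : Fin n, (v x (B (σ (ρ x))) - v x (B (σ x))) := by
      refine Finset.sum_subset (Finset.subset_univ _) ?_
      intro x _ hx
      have hρx : ρ x = x := by
        refine hfix x fun t ht hwx => hx ?_
        exact Finset.mem_image.mpr ⟨t, Finset.mem_range.mpr ht, hwx⟩
      rw [hρx, sub_self]
    rw [hsum1, hsum2, Finset.sum_sub_distrib]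
    have heq : ∑ x : Fin n, v x (B (σ (ρ x))) = ∑ i, v i (B ((ρ.trans σ) i)) := by
      simp [Equiv.trans_apply]
    rw [heq]
    linarith
  have hBwalk := EnvyWalk.closed_walk_nonpos c hcycle
  obtain ⟨p, hp0, hpef, hpd⟩ := EnvyWalk.exists_potentials c hn d hself hBwalk hcd'
  obtain ⟨i0, hi0⟩ := Finite.exists_min p
  refine ⟨A, fun i => p i - p i0, ?_, ?_, ?_, ?_, ?_, ⟨i0, sub_self _⟩, ?_⟩
  · -- disjointness
    intro i j hij
    rw [Finset.disjoint_left]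
    intro x hxi hxj
    simp only [hA, hkeyB, Finset.mem_filter] at hxi hxj
    exact hij (σ.injective (hxi.2.symm.trans hxj.2))
  · -- coverage
    intro x
    refine ⟨σ.symm (χ x), ?_⟩
    simp [hA, hkeyB]
  · intro i
    show 0 ≤ p i - p i0
    have := hi0 i
    linarith
  · intro i j
    show v i (A j) + (p j - p i0) ≤ v i (A i) + (p i - p i0)
    have h := hpef i j
    simp only [hc] at h
    linarith
  · intro i
    show p i - p i0 ≤ disc v n
    have h1 := hp0 i0
    have h2 := hpd i
    have h3 : d = disc v n := hd
    linarith
  · -- total payment bound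
    show ∑ i, (p i - p i0) ≤ ((n : ℝ) - 1) * disc v n
    have hsum : ∑ i, (p i - p i0) = ∑ i ∈ Finset.univ.erase i0, (p i - p i0) := by
      refine (Finset.sum_subset (Finset.erase_subset _ _) ?_).symm
      intro x _ hx
      have hxe : x = i0 := by
        by_contra h
        exact hx (Finset.mem_erase.mpr ⟨h, Finset.mem_univ _⟩)
      rw [hxe, sub_self]
    have h3 : d = disc v n := hd
    rw [hsum, ← h3]
    calc ∑ i ∈ Finset.univ.erase i0, (p i - p i0)
        ≤ ∑ _i ∈ Finset.univ.erase i0, d := by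
          refine Finset.sum_le_sum fun i _ => ?_
          have h1 := hp0 i0
          have h2 := hpd i
          linarith
      _ = ((n : ℝ) - 1) * d := by
          rw [Finset.sum_const, Finset.card_erase_of_mem (Finset.mem_univ _)]
          simp only [Finset.card_univ, Fintype.card_fin]
          rw [nsmul_eq_mul, Nat.cast_sub hn]
          norm_num
end
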